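/- arXiv:2605.31225 — 4 statements merged into one kernel-verified Lean document; each statement's English description precedes it below -/
import Mathlib

section
/- Let G be a finite simple graph that has neither K_4 nor K_{2,3} as a minor (i.e., G is outerplanar), and let u be a vertex of G. Then there exists an independent set I of G such that u ∈ I and the induced subgraph G − I contains no cycle (i.e., G − I is a forest). -/
open SimpleGraph

/-- A proper coloring of `G` with `ℓ` colors: adjacent vertices get distinct colors. -/
def IsProperColoring {V : Type} (G : SimpleGraph V) {ℓ : ℕ} (c : V → Fin ℓ) : Prop :=
  ∀ ⦃u v : V⦄, G.Adj u v → c u ≠ c v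

/-- `c` is a transformation sequence from `α` to `β`: a sequence of proper colorings
starting at `α`, ending at `β`, in which consecutive colorings differ on exactly one vertex. -/
def IsTransformSeq {V : Type} (G : SimpleGraph V) {ℓ m : ℕ}
    (c : Fin (m + 1) → V → Fin ℓ) (α β : V → Fin ℓ) : Prop :=
  c 0 = α ∧ c (Fin.last m) = β ∧ (∀ i, IsProperColoring G (c i)) ∧
    ∀ i : Fin m, ∃! v : V, c i.castSucc v ≠ c i.succ v

/-- The number of steps of the sequence `c` at which the vertex `v` is recolored. -/
def RecolorCount {V : Type} {ℓ m : ℕ} (c : Fin (m + 1) → V → Fin ℓ) (v : V) : ℕ :=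
  (Finset.univ.filter fun i : Fin m => c i.castSucc v ≠ c i.succ v).card

/-- `H` is a minor of `G`: there are pairwise disjoint nonempty branch sets in `G`, each
inducing a connected subgraph, with an edge of `G` between the branch sets of any two
vertices adjacent in `H`. -/
def IsMinor {W V : Type} (H : SimpleGraph W) (G : SimpleGraph V) : Prop :=
  ∃ B : W → Set V,
    (∀ h, (B h).Nonempty) ∧
    (Pairwise fun h h' => Disjoint (B h) (B h')) ∧
    (∀ h, (G.induce (B h)).Connected) ∧
    ∀ ⦃h h'⦄, H.Adj h h' → ∃ u ∈ B h, ∃ v ∈ B h', G.Adj u v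

namespace Outerp

variable {V : Type}

/-- degree as ncard of the neighbor set -/
noncomputable def deg (G : SimpleGraph V) (v : V) : ℕ := (G.neighborSet v).ncard

/-- delete all edges at a vertex -/
def Del (G : SimpleGraph V) (w : V) : SimpleGraph V where
  Adj x y := G.Adj x y ∧ x ≠ w ∧ y ≠ w
  symm := ⟨by intro x y ⟨h, hx, hy⟩; exact ⟨h.symm, hy, hx⟩⟩
  loopless := ⟨by intro x ⟨h, _, _⟩; exact G.loopless.irrefl x h⟩

/-- contract `q` onto `p`: all edges of `q` are moved to `p`, and `q` becomes isolated. -/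
def Con (G : SimpleGraph V) (p q : V) : SimpleGraph V where
  Adj x y := x ≠ y ∧ ((G.Adj x y ∧ x ≠ q ∧ y ≠ q) ∨ (x = p ∧ G.Adj q y ∧ y ≠ q)
      ∨ (y = p ∧ G.Adj q x ∧ x ≠ q))
  symm := by
    constructor
    rintro x y ⟨hne, h | h | h⟩
    · exact ⟨hne.symm, Or.inl ⟨h.1.symm, h.2.2, h.2.1⟩⟩
    · exact ⟨hne.symm, Or.inr (Or.inr h)⟩
    · exact ⟨hne.symm, Or.inr (Or.inl h)⟩
  loopless := ⟨by rintro x ⟨hne, -⟩; exact hne rfl⟩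

/-- no cycles of `G` inside the set `A` -/
def AcyOn (G : SimpleGraph V) (A : Set V) : Prop :=
  ∀ ⦃x : V⦄ (w : G.Walk x x), w.IsCycle → (∀ y ∈ w.support, y ∈ A) → False

lemma del_le (G : SimpleGraph V) (w : V) : Del G w ≤ G := fun _ _ h => h.1

lemma del_adj {G : SimpleGraph V} {w x y : V} :
    (Del G w).Adj x y ↔ G.Adj x y ∧ x ≠ w ∧ y ≠ w := Iff.rfl

lemma con_adj {G : SimpleGraph V} {p q x y : V} :
    (Con G p q).Adj x y ↔ x ≠ y ∧ ((G.Adj x y ∧ x ≠ q ∧ y ≠ q) ∨ (x = p ∧ G.Adj q y ∧ y ≠ q)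
      ∨ (y = p ∧ G.Adj q x ∧ x ≠ q)) := Iff.rfl

lemma con_adj_of_adj {G : SimpleGraph V} {p q x y : V} (h : G.Adj x y)
    (hx : x ≠ q) (hy : y ≠ q) : (Con G p q).Adj x y :=
  ⟨h.ne, Or.inl ⟨h, hx, hy⟩⟩

lemma not_con_adj_q {G : SimpleGraph V} {p q y : V} (hpq : p ≠ q) :
    ¬ (Con G p q).Adj q y := by
  rintro ⟨hne, ⟨-, hq, -⟩ | ⟨hq, -, -⟩ | ⟨-, -, hq⟩⟩
  · exact hq rfl
  · exact hpq hq.symm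
  · exact hq rfl

/-- neighbor set of untouched vertices in Con -/
lemma con_neighborSet_other {G : SimpleGraph V} {p q v : V} (hvp : v ≠ p) (hvq : v ≠ q) :
    (Con G p q).neighborSet v = (G.neighborSet v \ {q}) ∪ {x | x = p ∧ G.Adj q v} := by
  ext u
  simp only [mem_neighborSet, con_adj, Set.mem_union, Set.mem_diff, Set.mem_singleton_iff,
    Set.mem_setOf_eq]
  constructor
  · rintro ⟨hne, ⟨h, -, huq⟩ | ⟨hvp', -, -⟩ | ⟨hup, hqv, -⟩⟩
    · exact Or.inl ⟨h, huq⟩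
    · exact absurd hvp' hvp
    · exact Or.inr ⟨hup, hqv⟩
  · rintro (⟨h, huq⟩ | ⟨hup, hqv⟩)
    · exact ⟨h.ne, Or.inl ⟨h, hvq, huq⟩⟩
    · exact ⟨fun hvu => hvp (hvu.trans hup), Or.inr (Or.inr ⟨hup, hqv, hvq⟩)⟩

lemma con_neighborSet_p {G : SimpleGraph V} {p q : V} (hpq : p ≠ q) :
    (Con G p q).neighborSet p = (G.neighborSet p ∪ G.neighborSet q) \ {p, q} := by
  ext u
  constructor
  · rintro ⟨hne, ⟨h, hpq', huq⟩ | ⟨-, hqu, huq⟩ | ⟨hup, hq, -⟩⟩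
    · exact ⟨Or.inl h, by simp only [Set.mem_insert_iff, Set.mem_singleton_iff, not_or]; exact ⟨fun h' => hne h'.symm, huq⟩⟩
    · exact ⟨Or.inr hqu, by simp only [Set.mem_insert_iff, Set.mem_singleton_iff, not_or]; exact ⟨fun h' => hne h'.symm, huq⟩⟩
    · exact absurd hup.symm hne
  · rintro ⟨h | h, hu⟩
    · simp only [Set.mem_insert_iff, Set.mem_singleton_iff, not_or] at hu
      exact ⟨fun h' => hu.1 h'.symm, Or.inl ⟨h, hpq, hu.2⟩⟩
    · simp only [Set.mem_insert_iff, Set.mem_singleton_iff, not_or] at hu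
      exact ⟨fun h' => hu.1 h'.symm, Or.inr (Or.inl ⟨rfl, h, hu.2⟩)⟩

lemma con_neighborSet_q {G : SimpleGraph V} {p q : V} (hpq : p ≠ q) :
    (Con G p q).neighborSet q = ∅ := by
  ext u
  simp only [mem_neighborSet, Set.mem_empty_iff_false, iff_false]
  exact not_con_adj_q hpq


lemma del_neighborSet {G : SimpleGraph V} {w v : V} (hv : v ≠ w) :
    (Del G w).neighborSet v = G.neighborSet v \ {w} := by
  ext u
  simp only [mem_neighborSet, del_adj, Set.mem_diff, Set.mem_singleton_iff]
  exact ⟨fun ⟨h, _, hu⟩ => ⟨h, hu⟩, fun ⟨h, hu⟩ => ⟨h, hv, hu⟩⟩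

lemma del_neighborSet_self {G : SimpleGraph V} {w : V} :
    (Del G w).neighborSet w = ∅ := by
  ext u
  simp only [mem_neighborSet, del_adj, Set.mem_empty_iff_false, iff_false, not_and]
  exact fun _ h _ => h rfl

variable [Fintype V]

set_option linter.unusedSectionVars false

lemma deg_del_self {G : SimpleGraph V} {w : V} : deg (Del G w) w = 0 := by
  simp [deg, del_neighborSet_self]

lemma deg_del_of_adj {G : SimpleGraph V} {w v : V} (hv : v ≠ w) (h : G.Adj v w) :
    deg (Del G w) v = deg G v - 1 := by
  unfold deg
  rw [del_neighborSet hv, Set.ncard_diff_singleton_of_mem (s := G.neighborSet v) h]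

lemma deg_del_of_not_adj {G : SimpleGraph V} {w v : V} (hv : v ≠ w) (h : ¬ G.Adj v w) :
    deg (Del G w) v = deg G v := by
  unfold deg
  rw [del_neighborSet hv, Set.diff_singleton_eq_self (show _ ∉ G.neighborSet v from h)]

lemma deg_con_self {G : SimpleGraph V} {p q : V} (hpq : p ≠ q) : deg (Con G p q) q = 0 := by
  simp [deg, con_neighborSet_q hpq]

lemma deg_pos_of_adj {G : SimpleGraph V} {v u : V} (h : G.Adj v u) : 1 ≤ deg G v := by
  have : (G.neighborSet v).Nonempty := ⟨u, h⟩
  have := (Set.ncard_pos (Set.toFinite _)).2 this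
  unfold deg; omega

lemma deg_con_other_both {G : SimpleGraph V} {p q v : V} (hpq : p ≠ q) (hvp : v ≠ p) (hvq : v ≠ q)
    (hp : G.Adj v p) (hq : G.Adj v q) : deg (Con G p q) v = deg G v - 1 := by
  unfold deg
  rw [con_neighborSet_other hvp hvq]
  have h1 : {x | x = p ∧ G.Adj q v} ⊆ G.neighborSet v \ {q} := by
    rintro x ⟨hxp, -⟩
    subst hxp
    exact ⟨hp, by simpa using hpq⟩
  rw [Set.union_eq_self_of_subset_right h1,
    Set.ncard_diff_singleton_of_mem (s := G.neighborSet v) hq]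

lemma deg_con_other_not_q {G : SimpleGraph V} {p q v : V} (hvp : v ≠ p) (hvq : v ≠ q)
    (hq : ¬ G.Adj v q) : deg (Con G p q) v = deg G v := by
  have h1 : {x | x = p ∧ G.Adj q v} = (∅ : Set V) := by
    ext x; simp only [Set.mem_setOf_eq, Set.mem_empty_iff_false, iff_false, not_and]
    exact fun _ h => absurd h.symm hq
  unfold deg
  rw [con_neighborSet_other hvp hvq, h1, Set.union_empty,
    Set.diff_singleton_eq_self (show _ ∉ G.neighborSet v from hq)]

lemma deg_con_other_q_not_p {G : SimpleGraph V} {p q v : V} (hvp : v ≠ p) (hvq : v ≠ q)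
    (hp : ¬ G.Adj v p) (hq : G.Adj v q) : deg (Con G p q) v = deg G v := by
  have h1 : {x | x = p ∧ G.Adj q v} = ({p} : Set V) := by
    ext x; simp only [Set.mem_setOf_eq, Set.mem_singleton_iff]
    exact ⟨fun h => h.1, fun h => ⟨h, hq.symm⟩⟩
  unfold deg
  rw [con_neighborSet_other hvp hvq, h1, Set.union_singleton,
    Set.ncard_insert_of_notMem (by rintro ⟨h, -⟩; exact hp h) (Set.toFinite _),
    Set.ncard_diff_singleton_of_mem (s := G.neighborSet v) hq]
  have := deg_pos_of_adj hq
  unfold deg at this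
  omega


/-- measure: number of non-isolated vertices -/
noncomputable def mu (G : SimpleGraph V) : ℕ := (G.support).ncard

lemma mem_support_iff_deg {G : SimpleGraph V} {v : V} : v ∈ G.support ↔ 1 ≤ deg G v := by
  constructor
  · rintro ⟨w, hw⟩; exact deg_pos_of_adj hw
  · intro h
    have : (G.neighborSet v).Nonempty := by
      rw [← Set.ncard_pos (Set.toFinite _)]; exact h
    obtain ⟨w, hw⟩ := this
    exact ⟨w, hw⟩

lemma mu_del_lt {G : SimpleGraph V} {w : V} (hw : w ∈ G.support) : mu (Del G w) < mu G := by
  apply Set.ncard_lt_ncard _ (Set.toFinite _)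
  constructor
  · rintro v ⟨u, hu, hv, -⟩; exact ⟨u, hu⟩
  · intro hsub
    obtain ⟨u, hu⟩ := hsub hw
    exact hu.2.1 rfl

lemma mu_con_lt {G : SimpleGraph V} {p q : V} (hpq : G.Adj p q) : mu (Con G p q) < mu G := by
  apply Set.ncard_lt_ncard _ (Set.toFinite _)
  constructor
  · rintro v ⟨u, hne, ⟨h, -, -⟩ | ⟨rfl, h, -⟩ | ⟨-, h, hvq⟩⟩
    · exact ⟨u, h⟩
    · exact ⟨q, hpq⟩
    · exact ⟨q, h.symm⟩
  · intro hsub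
    obtain ⟨u, hu⟩ := hsub ⟨p, hpq.symm⟩
    exact not_con_adj_q hpq.ne hu

lemma induce_connected_singleton (G : SimpleGraph V) (a : V) :
    (G.induce {a}).Connected := by
  have : Nonempty ↥({a} : Set V) := ⟨⟨a, rfl⟩⟩
  constructor
  rintro ⟨x, hx⟩ ⟨y, hy⟩
  simp only [Set.mem_singleton_iff] at hx hy
  subst hx; subst hy
  exact Reachable.refl _

lemma induce_mono_graph {G₁ G₂ : SimpleGraph V} (h : G₁ ≤ G₂) (s : Set V) :
    G₁.induce s ≤ G₂.induce s := fun _ _ ha => h ha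

lemma isMinor_mono {W : Type} {H : SimpleGraph W} {G₁ G₂ : SimpleGraph V}
    (hm : IsMinor H G₁) (h : G₁ ≤ G₂) : IsMinor H G₂ := by
  obtain ⟨B, h1, h2, h3, h4⟩ := hm
  exact ⟨B, h1, h2, fun hh => (h3 hh).mono (induce_mono_graph h _),
    fun a b hab => by obtain ⟨u, hu, v, hv, huv⟩ := h4 hab; exact ⟨u, hu, v, hv, h huv⟩⟩

lemma isMinor_K4_of_clique {G : SimpleGraph V} {a b c d : V}
    (hab : G.Adj a b) (hac : G.Adj a c) (had : G.Adj a d)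
    (hbc : G.Adj b c) (hbd : G.Adj b d) (hcd : G.Adj c d) :
    IsMinor (⊤ : SimpleGraph (Fin 4)) G := by
  refine ⟨fun i => {![a, b, c, d] i}, fun i => ⟨_, rfl⟩, ?_, fun i => induce_connected_singleton _ _, ?_⟩
  · intro i j hij
    simp only [Set.disjoint_singleton]
    fin_cases i <;> fin_cases j <;>
      first
        | exact absurd rfl hij
        | simp only [Matrix.cons_val_zero, Matrix.cons_val_one, Matrix.head_cons,
            Matrix.cons_val_two, Matrix.tail_cons, Matrix.cons_val_three]
          first
            | exact hab.ne | exact hab.ne' | exact hac.ne | exact hac.ne'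
            | exact had.ne | exact had.ne' | exact hbc.ne | exact hbc.ne'
            | exact hbd.ne | exact hbd.ne' | exact hcd.ne | exact hcd.ne'
  · intro i j hij
    rw [top_adj] at hij
    refine ⟨![a,b,c,d] i, rfl, ![a,b,c,d] j, rfl, ?_⟩
    fin_cases i <;> fin_cases j <;>
      first
        | exact absurd rfl hij
        | simp only [Matrix.cons_val_zero, Matrix.cons_val_one, Matrix.head_cons,
            Matrix.cons_val_two, Matrix.tail_cons, Matrix.cons_val_three]
          first
            | exact hab | exact hab.symm | exact hac | exact hac.symm
            | exact had | exact had.symm | exact hbc | exact hbc.symm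
            | exact hbd | exact hbd.symm | exact hcd | exact hcd.symm


lemma isMinor_con {W : Type} {H : SimpleGraph W} {G : SimpleGraph V} {p q : V}
    (hpq : G.Adj p q) (hH : ∀ h, ∃ h', H.Adj h h')
    (hm : IsMinor H (Con G p q)) : IsMinor H G := by
  classical
  obtain ⟨B, hBne, hdisj, hconn, hadj⟩ := hm
  have hq : ∀ h, q ∉ B h := by
    intro h hqB
    have hsingle : ∀ x ∈ B h, x = q := by
      intro x hx
      obtain ⟨w⟩ := ((hconn h).preconnected ⟨q, hqB⟩ ⟨x, hx⟩)
      cases w with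
      | nil => rfl
      | cons a w' => exact absurd a (not_con_adj_q hpq.ne)
    obtain ⟨h', hh'⟩ := hH h
    obtain ⟨u, hu, v, hv, huv⟩ := hadj hh'
    rw [hsingle u hu] at huv
    exact not_con_adj_q hpq.ne huv
  refine ⟨fun h => B h ∪ {x | x = q ∧ p ∈ B h}, fun h => (hBne h).mono Set.subset_union_left,
    ?_, ?_, ?_⟩
  · intro h h' hne
    rw [Set.disjoint_left]
    rintro a (ha | ⟨rfl, hp⟩) (ha' | ⟨ha', hp'⟩)
    · exact Set.disjoint_left.1 (hdisj hne) ha ha'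
    · exact hq h (ha' ▸ ha)
    · exact hq h' ha'
    · exact Set.disjoint_left.1 (hdisj hne) hp hp'
  · intro h
    show (G.induce (B h ∪ {x | x = q ∧ p ∈ B h})).Connected
    by_cases hp : p ∈ B h
    · have hq2 : q ∈ B h ∪ {x | x = q ∧ p ∈ B h} := Or.inr ⟨rfl, hp⟩
      have key : ∀ (a b : ↥(B h)) (w : ((Con G p q).induce (B h)).Walk a b),
          (G.induce (B h ∪ {x | x = q ∧ p ∈ B h})).Reachable
            ⟨a.1, Or.inl a.2⟩ ⟨b.1, Or.inl b.2⟩ := by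
        intro a b w
        induction w with
        | nil => exact Reachable.refl _
        | @cons x y z e w' ih =>
          refine Reachable.trans ?_ ih
          obtain ⟨hne, ⟨h1, -, -⟩ | ⟨hxp, h1, -⟩ | ⟨hyp, h1, -⟩⟩ := e
          · exact Adj.reachable h1
          · have e1 : (G.induce (B h ∪ {x | x = q ∧ p ∈ B h})).Adj ⟨x.1, Or.inl x.2⟩ ⟨q, hq2⟩ := by
              show G.Adj x.1 q
              rw [show x.1 = p from hxp]; exact hpq
            have e2 : (G.induce (B h ∪ {x | x = q ∧ p ∈ B h})).Adj ⟨q, hq2⟩ ⟨y.1, Or.inl y.2⟩ := by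
              show G.Adj q y.1; exact h1
            exact e1.reachable.trans e2.reachable
          · have e1 : (G.induce (B h ∪ {x | x = q ∧ p ∈ B h})).Adj ⟨x.1, Or.inl x.2⟩ ⟨q, hq2⟩ := by
              show G.Adj x.1 q; exact h1.symm
            have e2 : (G.induce (B h ∪ {x | x = q ∧ p ∈ B h})).Adj ⟨q, hq2⟩ ⟨y.1, Or.inl y.2⟩ := by
              show G.Adj q y.1
              rw [show y.1 = p from hyp]; exact hpq.symm
            exact e1.reachable.trans e2.reachable
      have reach : ∀ (x : V) (hx : x ∈ B h ∪ {x | x = q ∧ p ∈ B h}),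
          (G.induce (B h ∪ {x | x = q ∧ p ∈ B h})).Reachable ⟨x, hx⟩ ⟨q, hq2⟩ := by
        rintro x (hx | ⟨rfl, -⟩)
        · obtain ⟨w⟩ := (hconn h).preconnected ⟨x, hx⟩ ⟨p, hp⟩
          exact (key _ _ w).trans (Adj.reachable (show G.Adj p q from hpq))
        · exact Reachable.refl _
      have : Nonempty ↥(B h ∪ {x | x = q ∧ p ∈ B h}) := ⟨⟨q, hq2⟩⟩
      constructor
      intro u v
      exact (reach u.1 u.2).trans (reach v.1 v.2).symm
    · have hset : B h ∪ {x | x = q ∧ p ∈ B h} = B h := by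
        apply Set.union_eq_self_of_subset_right
        rintro x ⟨-, hp'⟩
        exact absurd hp' hp
      rw [hset]
      have hmap : ∀ x y : ↥(B h), ((Con G p q).induce (B h)).Adj x y → (G.induce (B h)).Adj x y := by
        rintro x y ⟨hne, ⟨h1, -, -⟩ | ⟨hxp, -, -⟩ | ⟨hyp, -, -⟩⟩
        · exact h1
        · exact absurd (hxp ▸ x.2) hp
        · exact absurd (hyp ▸ y.2) hp
      exact (hconn h).map ⟨id, fun {x y} e => hmap x y e⟩ (fun x => ⟨x, rfl⟩)
  · intro a b hab
    obtain ⟨u, hu, v, hv, huv⟩ := hadj hab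
    obtain ⟨hne, ⟨h1, -, -⟩ | ⟨hup, h1, -⟩ | ⟨hvp, h1, -⟩⟩ := huv
    · exact ⟨u, Or.inl hu, v, Or.inl hv, h1⟩
    · exact ⟨q, Or.inr ⟨rfl, hup ▸ hu⟩, v, Or.inl hv, h1⟩
    · exact ⟨u, Or.inl hu, q, Or.inr ⟨rfl, hvp ▸ hv⟩, h1.symm⟩


lemma exists_nbr (G : SimpleGraph V) {v : V} (h : 1 ≤ deg G v) : ∃ a, G.Adj v a := by
  have : (G.neighborSet v).Nonempty := by
    rw [← Set.ncard_pos (Set.toFinite _)]; unfold deg at h; omega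
  exact this

lemma three_nbrs (G : SimpleGraph V) {v : V} (h : 3 ≤ deg G v) :
    ∃ a b c, G.Adj v a ∧ G.Adj v b ∧ G.Adj v c ∧ a ≠ b ∧ a ≠ c ∧ b ≠ c := by
  obtain ⟨t, hts, htc⟩ := Set.exists_subset_card_eq (s := G.neighborSet v) (show 3 ≤ _ from h)
  obtain ⟨a, b, c, hab, hac, hbc, rfl⟩ := Set.ncard_eq_three.1 htc
  exact ⟨a, b, c, hts (by simp), hts (by simp), hts (by simp), hab, hac, hbc⟩

lemma exists_nbr_ne_ne (G : SimpleGraph V) {v : V} (h : 3 ≤ deg G v) (x y : V) :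
    ∃ t, G.Adj v t ∧ t ≠ x ∧ t ≠ y := by
  obtain ⟨a, b, c, ha, hb, hc, hab, hac, hbc⟩ := three_nbrs G h
  by_cases hax : a = x
  · by_cases hby : b = y
    · exact ⟨c, hc, fun hh => hac (hh.trans hax.symm).symm, fun hh => hbc (hby.trans hh.symm)⟩
    · by_cases hbx : b = x
      · exact absurd (hax.trans hbx.symm) hab
      · exact ⟨b, hb, hbx, hby⟩
  · by_cases hay : a = y
    · by_cases hbx : b = x
      · exact ⟨c, hc, fun hh => hbc (hbx.trans hh.symm), fun hh => hac (hh.trans hay.symm).symm⟩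
      · by_cases hby : b = y
        · exact absurd (hay.trans hby.symm) hab
        · exact ⟨b, hb, hbx, hby⟩
    · exact ⟨a, ha, hax, hay⟩

lemma exists_pair_nbr_ne (G : SimpleGraph V) {v : V} (h : 3 ≤ deg G v) (x : V) :
    ∃ s t, G.Adj v s ∧ G.Adj v t ∧ s ≠ t ∧ s ≠ x ∧ t ≠ x := by
  obtain ⟨a, b, c, ha, hb, hc, hab, hac, hbc⟩ := three_nbrs G h
  by_cases hax : a = x
  · exact ⟨b, c, hb, hc, hbc, fun hh => hab (hax ▸ hh ▸ rfl), fun hh => hac (hax ▸ hh ▸ rfl)⟩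
  · by_cases hbx : b = x
    · exact ⟨a, c, ha, hc, hac, hax, fun hh => hbc (hbx ▸ hh ▸ rfl)⟩
    · exact ⟨a, b, ha, hb, hab, hax, hbx⟩

lemma adj_mem_of_deg3 {G : SimpleGraph V} {v a b c : V} (h3 : deg G v = 3)
    (ha : G.Adj v a) (hb : G.Adj v b) (hc : G.Adj v c)
    (hab : a ≠ b) (hac : a ≠ c) (hbc : b ≠ c) {x : V} (hx : G.Adj v x) :
    x = a ∨ x = b ∨ x = c := by
  have hsub : ({a, b, c} : Set V) ⊆ G.neighborSet v := by
    rintro t (rfl | rfl | rfl) <;> assumption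
  have hcard : ({a, b, c} : Set V).ncard = 3 := by
    rw [Set.ncard_insert_of_notMem (by simp [hab, hac]) (Set.toFinite _),
      Set.ncard_insert_of_notMem (by simp [hbc]) (Set.toFinite _), Set.ncard_singleton]
  have heq := Set.eq_of_subset_of_ncard_le hsub (by rw [hcard]; exact (show (G.neighborSet v).ncard = 3 from h3).le) (Set.toFinite _)
  have : x ∈ ({a, b, c} : Set V) := heq ▸ (show x ∈ G.neighborSet v from hx)
  simpa using this


lemma deg_con_p_deg2 {G : SimpleGraph V} {v₀ a b : V} (hN : G.neighborSet v₀ = {a, b})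
    (hab : a ≠ b) (hnadj : ¬ G.Adj a b) : deg (Con G a v₀) a = deg G a := by
  have ha : G.Adj v₀ a := by rw [← mem_neighborSet, hN]; exact Or.inl rfl
  have hb : G.Adj v₀ b := by rw [← mem_neighborSet, hN]; exact Or.inr rfl
  have hav : a ≠ v₀ := ha.ne'
  unfold deg
  rw [con_neighborSet_p hav, hN]
  have hset : (G.neighborSet a ∪ {a, b}) \ {a, v₀} = insert b (G.neighborSet a \ {v₀}) := by
    ext x
    simp only [Set.mem_diff, Set.mem_union, Set.mem_insert_iff, Set.mem_singleton_iff,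
      mem_neighborSet, not_or]
    constructor
    · rintro ⟨hx | hx | hx, hxa, hxv⟩
      · exact Or.inr ⟨hx, hxv⟩
      · exact absurd hx hxa
      · exact Or.inl hx
    · rintro (rfl | ⟨hx, hxv⟩)
      · exact ⟨Or.inr (Or.inr rfl), hab.symm, hb.ne'⟩
      · exact ⟨Or.inl hx, fun h => G.loopless.irrefl a (h ▸ hx), hxv⟩
  rw [hset, Set.ncard_insert_of_notMem (by rintro ⟨h, -⟩; exact hnadj h) (Set.toFinite _),
    Set.ncard_diff_singleton_of_mem (show v₀ ∈ G.neighborSet a from ha.symm)]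
  have h1 : 1 ≤ deg G a := deg_pos_of_adj ha.symm
  unfold deg at h1
  omega

lemma hHK4 : ∀ h : Fin 4, ∃ h', (⊤ : SimpleGraph (Fin 4)).Adj h h' := by
  intro h
  obtain ⟨y, hy⟩ := exists_ne h
  exact ⟨y, by simpa using hy.symm⟩

lemma dirac : ∀ (n : ℕ) (V : Type) [Fintype V] (G : SimpleGraph V), mu G ≤ n →
    (∀ a b : V, 1 ≤ deg G a → deg G a ≤ 2 → 1 ≤ deg G b → deg G b ≤ 2 → a = b ∨ G.Adj a b) →
    (∃ w, 3 ≤ deg G w) → IsMinor (⊤ : SimpleGraph (Fin 4)) G := by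
  intro n
  induction n using Nat.strong_induction_on with
  | _ n IH =>
  intro V _ G hmu hclq hwit
  obtain ⟨w, hw⟩ := hwit
  by_cases hS : ∃ v, 1 ≤ deg G v ∧ deg G v ≤ 2
  · obtain ⟨v₀, hd1, hd2⟩ := hS
    have hwv₀ : w ≠ v₀ := by intro h; rw [h] at hw; omega
    have hcase : deg G v₀ = 1 ∨ deg G v₀ = 2 := by omega
    rcases hcase with hdeg | hdeg
    · -- degree 1
      obtain ⟨a, hNa⟩ := Set.ncard_eq_one.1 hdeg
      have ha : G.Adj v₀ a := by rw [← mem_neighborSet, hNa]; rfl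
      have hadjv₀ : ∀ x, G.Adj x v₀ → x = a := by
        intro x hx
        have : x ∈ G.neighborSet v₀ := hx.symm
        rwa [hNa] at this
      have hdegDel : ∀ x, x ≠ v₀ → x ≠ a → deg (Del G v₀) x = deg G x := by
        intro x hxv hxa
        exact deg_del_of_not_adj hxv (fun h => hxa (hadjv₀ x h))
      have hchar : ∀ x, 1 ≤ deg (Del G v₀) x → deg (Del G v₀) x ≤ 2 → x = a := by
        intro x h1 h2
        have hxv : x ≠ v₀ := by
          rintro rfl; rw [deg_del_self] at h1; omega
        by_contra hxa
        rw [hdegDel x hxv hxa] at h1 h2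
        rcases hclq x v₀ h1 h2 hd1 hd2 with h | h
        · exact hxv h
        · exact hxa (hadjv₀ x h)
      have hclq' : ∀ s t : V, 1 ≤ deg (Del G v₀) s → deg (Del G v₀) s ≤ 2 →
          1 ≤ deg (Del G v₀) t → deg (Del G v₀) t ≤ 2 → s = t ∨ (Del G v₀).Adj s t := by
        intro s t hs1 hs2 ht1 ht2
        exact Or.inl ((hchar s hs1 hs2).trans (hchar t ht1 ht2).symm)
      have hwit' : ∃ x, 3 ≤ deg (Del G v₀) x := by
        by_cases hwa : w = a
        · obtain ⟨t, hat, htv, hta⟩ := exists_nbr_ne_ne G (hwa ▸ hw) v₀ a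
          have ht3 : 3 ≤ deg G t := by
            by_contra hlt
            have ht1 : 1 ≤ deg G t := deg_pos_of_adj hat.symm
            rcases hclq t v₀ ht1 (by omega) hd1 hd2 with h | h
            · exact htv h
            · exact hta (hadjv₀ t h)
          rw [← hdegDel t htv hta] at ht3
          exact ⟨t, ht3⟩
        · have : deg (Del G v₀) w = deg G w := hdegDel w hwv₀ hwa
          exact ⟨w, by omega⟩
      have hmu' : mu (Del G v₀) < n :=
        lt_of_lt_of_le (mu_del_lt (mem_support_iff_deg.2 hd1)) hmu
      exact isMinor_mono (IH _ hmu' V (Del G v₀) le_rfl hclq' hwit') (del_le G v₀)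
    · -- degree 2
      obtain ⟨a, b, hab, hNab⟩ := Set.ncard_eq_two.1 hdeg
      have ha : G.Adj v₀ a := by rw [← mem_neighborSet, hNab]; exact Or.inl rfl
      have hb : G.Adj v₀ b := by rw [← mem_neighborSet, hNab]; exact Or.inr rfl
      have hadjv₀ : ∀ x, G.Adj x v₀ → x = a ∨ x = b := by
        intro x hx
        have : x ∈ G.neighborSet v₀ := hx.symm
        rwa [hNab] at this
      by_cases hadj : G.Adj a b
      · -- neighbors adjacent: delete v₀
        have hdegDel : ∀ x, x ≠ v₀ → x ≠ a → x ≠ b → deg (Del G v₀) x = deg G x := by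
          intro x hxv hxa hxb
          refine deg_del_of_not_adj hxv (fun h => ?_)
          rcases hadjv₀ x h with h' | h'
          · exact hxa h'
          · exact hxb h'
        have hchar : ∀ x, 1 ≤ deg (Del G v₀) x → deg (Del G v₀) x ≤ 2 → x = a ∨ x = b := by
          intro x h1 h2
          have hxv : x ≠ v₀ := by rintro rfl; rw [deg_del_self] at h1; omega
          by_contra hxab
          push_neg at hxab
          rw [hdegDel x hxv hxab.1 hxab.2] at h1 h2
          rcases hclq x v₀ h1 h2 hd1 hd2 with h | h
          · exact hxv h
          · rcases hadjv₀ x h with h' | h'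
            · exact hxab.1 h'
            · exact hxab.2 h'
        have hclq' : ∀ s t : V, 1 ≤ deg (Del G v₀) s → deg (Del G v₀) s ≤ 2 →
            1 ≤ deg (Del G v₀) t → deg (Del G v₀) t ≤ 2 → s = t ∨ (Del G v₀).Adj s t := by
          intro s t hs1 hs2 ht1 ht2
          rcases hchar s hs1 hs2 with rfl | rfl <;> rcases hchar t ht1 ht2 with rfl | rfl
          · exact Or.inl rfl
          · exact Or.inr ⟨hadj, ha.ne', hb.ne'⟩
          · exact Or.inr ⟨hadj.symm, hb.ne', ha.ne'⟩
          · exact Or.inl rfl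
        have hwit' : ∃ x, 3 ≤ deg (Del G v₀) x := by
          have good : ∀ t, t ≠ v₀ → t ≠ a → t ≠ b → 3 ≤ deg G t → ∃ x, 3 ≤ deg (Del G v₀) x := by
            intro t h1 h2 h3 h4
            exact ⟨t, by rw [hdegDel t h1 h2 h3]; exact h4⟩
          by_cases hwa : w = a
          · obtain ⟨t, hat, htv, htb⟩ := exists_nbr_ne_ne G (hwa ▸ hw) v₀ b
            have ht1 : 1 ≤ deg G t := deg_pos_of_adj hat.symm
            have ht3 : 3 ≤ deg G t := by
              by_contra hlt
              rcases hclq t v₀ ht1 (by omega) hd1 hd2 with h | h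
              · exact htv h
              · rcases hadjv₀ t h with h' | h'
                · exact hat.ne' h'
                · exact htb h'
            exact good t htv (fun h => hat.ne' h) htb ht3
          · by_cases hwb : w = b
            · obtain ⟨t, hbt, htv, hta⟩ := exists_nbr_ne_ne G (hwb ▸ hw) v₀ a
              have ht1 : 1 ≤ deg G t := deg_pos_of_adj hbt.symm
              have ht3 : 3 ≤ deg G t := by
                by_contra hlt
                rcases hclq t v₀ ht1 (by omega) hd1 hd2 with h | h
                · exact htv h
                · rcases hadjv₀ t h with h' | h'
                  · exact hta h'
                  · exact hbt.ne' h'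
              exact good t htv hta (fun h => hbt.ne' h) ht3
            · exact good w hwv₀ hwa hwb hw
        have hmu' : mu (Del G v₀) < n :=
          lt_of_lt_of_le (mu_del_lt (mem_support_iff_deg.2 hd1)) hmu
        exact isMinor_mono (IH _ hmu' V (Del G v₀) le_rfl hclq' hwit') (del_le G v₀)
      · -- neighbors non-adjacent: contract v₀ into a
        have hav : a ≠ v₀ := ha.ne'
        have hbv : b ≠ v₀ := hb.ne'
        have hdegCon : ∀ x, x ≠ v₀ → deg (Con G a v₀) x = deg G x := by
          intro x hxv
          by_cases hxa : x = a
          · subst hxa; exact deg_con_p_deg2 hNab hab hadj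
          · by_cases hxq : G.Adj x v₀
            · rcases hadjv₀ x hxq with h' | h'
              · exact absurd h' hxa
              · subst h'
                exact deg_con_other_q_not_p hxa hxv (fun h => hadj h.symm) hxq
            · exact deg_con_other_not_q hxa hxv hxq
        have hclq' : ∀ s t : V, 1 ≤ deg (Con G a v₀) s → deg (Con G a v₀) s ≤ 2 →
            1 ≤ deg (Con G a v₀) t → deg (Con G a v₀) t ≤ 2 → s = t ∨ (Con G a v₀).Adj s t := by
          intro s t hs1 hs2 ht1 ht2
          have hsv : s ≠ v₀ := by rintro rfl; rw [deg_con_self hav] at hs1; omega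
          have htv : t ≠ v₀ := by rintro rfl; rw [deg_con_self hav] at ht1; omega
          rw [hdegCon s hsv] at hs1 hs2
          rw [hdegCon t htv] at ht1 ht2
          rcases hclq s t hs1 hs2 ht1 ht2 with h | h
          · exact Or.inl h
          · exact Or.inr (con_adj_of_adj h hsv htv)
        have hwit' : ∃ x, 3 ≤ deg (Con G a v₀) x := ⟨w, by rw [hdegCon w hwv₀]; exact hw⟩
        have hmu' : mu (Con G a v₀) < n :=
          lt_of_lt_of_le (mu_con_lt ha.symm) hmu
        exact isMinor_con ha.symm hHK4 (IH _ hmu' V (Con G a v₀) le_rfl hclq' hwit')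
  · -- state 0
    have hstate : ∀ v, deg G v = 0 ∨ 3 ≤ deg G v := by
      intro v
      by_cases h1 : 1 ≤ deg G v
      · right
        by_contra h2
        exact hS ⟨v, h1, by omega⟩
      · left; omega
    have key : ∀ p q : V, G.Adj p q → 3 ≤ deg G p →
        IsMinor (⊤ : SimpleGraph (Fin 4)) G ∨
        ∃ z1 z2, z1 ≠ z2 ∧ ¬ G.Adj z1 z2 ∧ G.Adj p z1 ∧ G.Adj q z1 ∧ deg G z1 = 3 ∧
          G.Adj p z2 ∧ G.Adj q z2 ∧ deg G z2 = 3 := by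
      intro p q hpq hp3
      by_cases hpair : ∃ z1 z2, z1 ≠ z2 ∧ ¬ G.Adj z1 z2 ∧ G.Adj p z1 ∧ G.Adj q z1 ∧
          deg G z1 = 3 ∧ G.Adj p z2 ∧ G.Adj q z2 ∧ deg G z2 = 3
      · exact Or.inr hpair
      left
      have hdefic : ∀ x, 1 ≤ deg (Con G p q) x → deg (Con G p q) x ≤ 2 → x ≠ p →
          G.Adj x p ∧ G.Adj x q ∧ deg G x = 3 := by
        intro x h1 h2 hxp
        have hxq : x ≠ q := by
          rintro rfl
          rw [deg_con_self hpq.ne] at h1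
          omega
        by_cases hq' : G.Adj x q
        · by_cases hp' : G.Adj x p
          · have hd := deg_con_other_both hpq.ne hxp hxq hp' hq'
            have h0 := hstate x
            have hpos := deg_pos_of_adj hp'
            exact ⟨hp', hq', by omega⟩
          · have hd := deg_con_other_q_not_p hxp hxq hp' hq'
            have h0 := hstate x
            have hpos := deg_pos_of_adj hq'
            omega
        · have hd := deg_con_other_not_q hxp hxq hq'
          have h0 := hstate x
          rcases h0 with h0 | h0
          · omega
          · omega
      by_cases hwitc : ∃ x, 3 ≤ deg (Con G p q) x
      · have hclq' : ∀ s t : V, 1 ≤ deg (Con G p q) s → deg (Con G p q) s ≤ 2 →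
            1 ≤ deg (Con G p q) t → deg (Con G p q) t ≤ 2 → s = t ∨ (Con G p q).Adj s t := by
          intro s t hs1 hs2 ht1 ht2
          by_cases hst : s = t
          · exact Or.inl hst
          by_cases hsp : s = p
          · subst hsp
            obtain ⟨htp', htq', htd⟩ := hdefic t ht1 ht2 (fun h => hst h.symm)
            exact Or.inr (con_adj_of_adj htp'.symm hpq.ne htq'.ne)
          by_cases htp : t = p
          · subst htp
            obtain ⟨hsp', hsq', hsd⟩ := hdefic s hs1 hs2 hsp
            exact Or.inr (con_adj_of_adj hsp' hsq'.ne hpq.ne)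
          obtain ⟨hsp', hsq', hsd⟩ := hdefic s hs1 hs2 hsp
          obtain ⟨htp', htq', htd⟩ := hdefic t ht1 ht2 htp
          by_cases hadj : G.Adj s t
          · exact Or.inr (con_adj_of_adj hadj hsq'.ne htq'.ne)
          · exact absurd ⟨s, t, hst, hadj, hsp'.symm, hsq'.symm, hsd, htp'.symm, htq'.symm, htd⟩ hpair
        have hmu' : mu (Con G p q) < n := lt_of_lt_of_le (mu_con_lt hpq) hmu
        exact isMinor_con hpq hHK4 (IH _ hmu' V (Con G p q) le_rfl hclq' hwitc)
      · push_neg at hwitc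
        obtain ⟨s, t, hps, hpt, hst, hsq, htq⟩ := exists_pair_nbr_ne G hp3 q
        have hsp : s ≠ p := hps.ne'
        have htp : t ≠ p := hpt.ne'
        have hs1 : 1 ≤ deg (Con G p q) s :=
          deg_pos_of_adj (con_adj_of_adj hps.symm hsq hpq.ne)
        have ht1 : 1 ≤ deg (Con G p q) t :=
          deg_pos_of_adj (con_adj_of_adj hpt.symm htq hpq.ne)
        obtain ⟨hsp', hsq', hsd⟩ := hdefic s hs1 (by have := hwitc s; omega) hsp
        obtain ⟨htp', htq', htd⟩ := hdefic t ht1 (by have := hwitc t; omega) htp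
        by_cases hadj : G.Adj s t
        · exact isMinor_K4_of_clique hpq hps hpt hsq'.symm htq'.symm hadj
        · exact absurd ⟨s, t, hst, hadj, hsp'.symm, hsq'.symm, hsd, htp'.symm, htq'.symm, htd⟩ hpair
    -- the chain
    obtain ⟨y, hy⟩ := exists_nbr G (by omega : 1 ≤ deg G w)
    rcases key w y hy hw with hmin | ⟨z1, z2, hz12, hznadj, hwz1, hyz1, hdz1, hwz2, hyz2, hdz2⟩
    · exact hmin
    rcases key w z1 hwz1 hw with hmin | ⟨u1, u2, hu12, hunadj, hwu1, hz1u1, hdu1, hwu2, hz1u2, hdu2⟩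
    · exact hmin
    -- N z1 \ {w} = {u1, u2}; y belongs to it, so deg G y = 3
    have hNz1w : (G.neighborSet z1 \ {w}).ncard = 2 := by
      rw [Set.ncard_diff_singleton_of_mem (show w ∈ G.neighborSet z1 from hwz1.symm)]
      unfold deg at hdz1
      omega
    have hsubu : ({u1, u2} : Set V) ⊆ G.neighborSet z1 \ {w} := by
      rintro x (rfl | rfl)
      · exact ⟨hz1u1, hwu1.ne'⟩
      · exact ⟨hz1u2, hwu2.ne'⟩
    have hequ : ({u1, u2} : Set V) = G.neighborSet z1 \ {w} := by
      apply Set.eq_of_subset_of_ncard_le hsubu _ (Set.toFinite _)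
      rw [hNz1w, Set.ncard_pair hu12]
    have hy3 : deg G y = 3 := by
      have hymem : y ∈ ({u1, u2} : Set V) := by
        rw [hequ]
        exact ⟨hyz1.symm, hy.ne'⟩
      rcases hymem with rfl | rfl
      · exact hdu1
      · exact hdu2
    rcases key y z1 hyz1 (by omega) with hmin |
        ⟨w1, w2, hw12, hwnadj, hyw1, hz1w1, hdw1, hyw2, hz1w2, hdw2⟩
    · exact hmin
    -- neighbors of y are exactly w, z1, z2
    have hwy_ne_z1 : w ≠ z1 := hwz1.ne
    have hwy_ne_z2 : w ≠ z2 := hwz2.ne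
    have hchar : ∀ x, G.Adj y x → x = w ∨ x = z1 ∨ x = z2 :=
      fun x hx => adj_mem_of_deg3 hy3 hy.symm hyz1 hyz2 hwy_ne_z1 hwy_ne_z2 hz12 hx
    have hw1w : w1 = w := by
      rcases hchar w1 hyw1 with h | h | h
      · exact h
      · exact absurd (h ▸ hz1w1) (G.loopless.irrefl z1)
      · exact absurd (h ▸ hz1w1) (fun hh => hznadj hh)
    have hw2w : w2 = w := by
      rcases hchar w2 hyw2 with h | h | h
      · exact h
      · exact absurd (h ▸ hz1w2) (G.loopless.irrefl z1)
      · exact absurd (h ▸ hz1w2) (fun hh => hznadj hh)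
    exact absurd (hw1w.trans hw2w.symm) hw12


lemma acyOn_transfer {G G' : SimpleGraph V} {A A' : Set V}
    (hadj : ∀ x y, x ∈ A → y ∈ A → G.Adj x y → G'.Adj x y) (hsub : A ⊆ A')
    (h : AcyOn G' A') : AcyOn G A := by
  intro x w hc hsupp
  have hedges : ∀ e ∈ w.edges, e ∈ G'.edgeSet := by
    intro e he
    induction e with
    | _ a b =>
      have hab : G.Adj a b := w.adj_of_mem_edges he
      have ha : a ∈ A := hsupp a (w.fst_mem_support_of_mem_edges he)
      have hb : b ∈ A := hsupp b (w.snd_mem_support_of_mem_edges he)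
      exact hadj a b ha hb hab
  have hcyc : (w.transfer G' hedges).IsCycle := by
    rw [Walk.isCycle_def, Walk.isTrail_def, Walk.edges_transfer, Walk.support_transfer]
    refine ⟨hc.isTrail.edges_nodup, ?_, hc.support_nodup⟩
    intro hnil
    have hlen := congrArg Walk.length hnil
    rw [Walk.length_transfer, Walk.length_nil] at hlen
    have := hc.three_le_length
    omega
  exact h (w.transfer G' hedges) hcyc
    (fun y hy => hsub (hsupp y (by rwa [Walk.support_transfer] at hy)))

lemma acyOn_pendant {G : SimpleGraph V} {A : Set V} {v : V}
    (h : AcyOn G (A \ {v}))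
    (huniq : ∀ x y, x ∈ A → y ∈ A → G.Adj v x → G.Adj v y → x = y) :
    AcyOn G A := by
  classical
  intro x w hc hsupp
  by_cases hv : v ∈ w.support
  · have hc' : (w.rotate v hv).IsCycle := hc.rotate hv
    have hsupp' : ∀ y ∈ (w.rotate v hv).support, y ∈ A := by
      intro y hy
      rcases List.mem_cons.1 ((w.rotate v hv).support_eq_cons ▸ hy) with rfl | hy'
      · exact hsupp _ hv
      · have := (w.support_rotate v hv).mem_iff.1 hy'
        exact hsupp _ (List.mem_of_mem_tail this)
    generalize hw' : w.rotate v hv = w' at hc' hsupp'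
    clear hw' hsupp hc hv w
    cases w' with
    | nil => exact hc'.ne_nil rfl
    | @cons _ b _ hvb q =>
      obtain ⟨d, r, hdv, hconcat⟩ := Walk.exists_cons_eq_concat hvb q
      have hbA : b ∈ A := hsupp' b (by simp [Walk.support_cons, q.start_mem_support])
      have hdA : d ∈ A := by
        apply hsupp' d
        rw [hconcat, Walk.support_concat]
        simp only [List.concat_eq_append, List.mem_append]
        exact Or.inl r.end_mem_support
      have hbd : b = d := huniq b d hbA hdA hvb hdv.symm
      have hnodup := hc'.isTrail.edges_nodup
      rw [Walk.edges_cons] at hnodup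
      have hno : s(v, b) ∉ q.edges := (List.nodup_cons.1 hnodup).1
      have hE : s(v, b) :: q.edges = r.edges ++ [s(d, v)] := by
        rw [← Walk.edges_cons hvb q, hconcat, Walk.edges_concat, List.concat_eq_append]
      have hsv : s(d, v) = s(v, b) := by rw [hbd]; exact Sym2.eq_swap
      cases hr : r.edges with
      | nil =>
        rw [hr, List.nil_append] at hE
        have hq : q.edges = [] := by
          have := congrArg List.tail hE
          simpa using this
        have hql : q.length = 0 := by
          rw [← Walk.length_edges, hq]
          rfl
        have h3 := hc'.three_le_length
        rw [Walk.length_cons] at h3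
        omega
      | cons f rest =>
        rw [hr] at hE
        simp only [List.cons_append, List.cons.injEq] at hE
        apply hno
        rw [hE.2, ← hsv]
        simp
  · exact h w hc (fun y hy => ⟨hsupp y hy, fun h' => hv (h' ▸ hy)⟩)

lemma fin3_succ_ne : ∀ x : Fin 3, x + 1 ≠ x := by decide

lemma fin3_third : ∀ x y : Fin 3, x ≠ y →
    ∃ z, z ≠ x ∧ z ≠ y ∧ ∀ k : Fin 3, k = x ∨ k = y ∨ k = z := by decide


lemma exists_good_coloring : ∀ (n : ℕ) (V : Type) [Fintype V] (G : SimpleGraph V), mu G ≤ n →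
    (¬ IsMinor (⊤ : SimpleGraph (Fin 4)) G) →
    ∃ c : V → Fin 3, (∀ x y, G.Adj x y → c x ≠ c y) ∧ ∀ k, AcyOn G {v | c v ≠ k} := by
  intro n
  induction n using Nat.strong_induction_on with
  | _ n IH =>
  intro V _ G hmu h4
  classical
  by_cases hE : ∃ v, 1 ≤ deg G v
  case neg =>
    have hno : ∀ x y : V, ¬ G.Adj x y := fun x y h => hE ⟨x, deg_pos_of_adj h⟩
    refine ⟨fun _ => 0, fun x y hxy => absurd hxy (hno x y), ?_⟩
    intro k x w hc hsupp
    cases w with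
    | nil => exact hc.ne_nil rfl
    | cons h p => exact hno _ _ h
  obtain ⟨v₁, hv₁⟩ := hE
  by_cases hs : ∃ v₀, 1 ≤ deg G v₀ ∧ deg G v₀ ≤ 2
  case neg =>
    exfalso
    apply h4
    apply dirac (mu G) V G le_rfl
    · intro a b ha1 ha2 _ _
      exact absurd ⟨a, ha1, ha2⟩ hs
    · refine ⟨v₁, ?_⟩
      by_contra hlt
      exact hs ⟨v₁, hv₁, by omega⟩
  obtain ⟨v₀, hd1, hd2⟩ := hs
  have hfold : deg G v₀ = 1 ∨ deg G v₀ = 2 := by omega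
  rcases hfold with hdeg | hdeg
  · -- degree 1 : delete v₀
    obtain ⟨a, hNa⟩ := Set.ncard_eq_one.1 hdeg
    have ha : G.Adj v₀ a := by rw [← mem_neighborSet, hNa]; rfl
    have hadjv₀ : ∀ x, G.Adj v₀ x → x = a := by
      intro x hx
      have : x ∈ G.neighborSet v₀ := hx
      rwa [hNa] at this
    have h4' : ¬ IsMinor (⊤ : SimpleGraph (Fin 4)) (Del G v₀) :=
      fun hm => h4 (isMinor_mono hm (del_le G v₀))
    obtain ⟨c', hproper', hacy'⟩ := IH (mu (Del G v₀))
      (lt_of_lt_of_le (mu_del_lt (mem_support_iff_deg.2 hd1)) hmu) V (Del G v₀) le_rfl h4'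
    set c : V → Fin 3 := Function.update c' v₀ (c' a + 1) with hcdef
    have hcoff : ∀ x, x ≠ v₀ → c x = c' x := fun x hx => Function.update_of_ne hx _ _
    have hcv : c v₀ = c' a + 1 := Function.update_self _ _ _
    have hav : a ≠ v₀ := ha.ne'
    refine ⟨c, ?_, ?_⟩
    · intro x y hxy
      by_cases hxv : x = v₀
      · subst hxv
        rw [hadjv₀ y hxy, hcv, hcoff a hav]
        exact fin3_succ_ne (c' a)
      · by_cases hyv : y = v₀
        · subst hyv
          rw [hadjv₀ x hxy.symm, hcv, hcoff a hav]
          exact (fin3_succ_ne (c' a)).symm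
        · rw [hcoff x hxv, hcoff y hyv]
          exact hproper' x y ⟨hxy, hxv, hyv⟩
    · intro k
      have hbase : AcyOn G ({v | c v ≠ k} \ {v₀}) := by
        refine acyOn_transfer (G' := Del G v₀) (A' := {v | c' v ≠ k}) ?_ ?_ (hacy' k)
        · rintro x y ⟨hx, hxv⟩ ⟨hy, hyv⟩ hxy
          exact ⟨hxy, hxv, hyv⟩
        · rintro x ⟨hx, hxv⟩
          show c' x ≠ k
          rw [← hcoff x hxv]
          exact hx
      exact acyOn_pendant hbase
        (fun x y _ _ hvx hvy => (hadjv₀ x hvx).trans (hadjv₀ y hvy).symm)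
  · -- degree 2
    obtain ⟨a, b, hab, hNab⟩ := Set.ncard_eq_two.1 hdeg
    have ha : G.Adj v₀ a := by rw [← mem_neighborSet, hNab]; exact Or.inl rfl
    have hb : G.Adj v₀ b := by rw [← mem_neighborSet, hNab]; exact Or.inr rfl
    have hadjv₀ : ∀ x, G.Adj v₀ x → x = a ∨ x = b := by
      intro x hx
      have : x ∈ G.neighborSet v₀ := hx
      rwa [hNab] at this
    have hav : a ≠ v₀ := ha.ne'
    have hbv : b ≠ v₀ := hb.ne'
    by_cases hadj : G.Adj a b
    · -- delete v₀
      have h4' : ¬ IsMinor (⊤ : SimpleGraph (Fin 4)) (Del G v₀) :=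
        fun hm => h4 (isMinor_mono hm (del_le G v₀))
      obtain ⟨c', hproper', hacy'⟩ := IH (mu (Del G v₀))
        (lt_of_lt_of_le (mu_del_lt (mem_support_iff_deg.2 hd1)) hmu) V (Del G v₀) le_rfl h4'
      have hc'ab : c' a ≠ c' b := hproper' a b ⟨hadj, hav, hbv⟩
      obtain ⟨z, hza, hzb, hcover⟩ := fin3_third _ _ hc'ab
      set c : V → Fin 3 := Function.update c' v₀ z with hcdef
      have hcoff : ∀ x, x ≠ v₀ → c x = c' x := fun x hx => Function.update_of_ne hx _ _
      have hcv : c v₀ = z := Function.update_self _ _ _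
      refine ⟨c, ?_, ?_⟩
      · intro x y hxy
        by_cases hxv : x = v₀
        · subst hxv
          rw [hcv]
          rcases hadjv₀ y hxy with rfl | rfl
          · rw [hcoff y hav]; exact hza
          · rw [hcoff y hbv]; exact hzb
        · by_cases hyv : y = v₀
          · subst hyv
            rw [hcv]
            rcases hadjv₀ x hxy.symm with rfl | rfl
            · rw [hcoff x hav]; exact hza.symm
            · rw [hcoff x hbv]; exact hzb.symm
          · rw [hcoff x hxv, hcoff y hyv]
            exact hproper' x y ⟨hxy, hxv, hyv⟩
      · intro k
        have hbase : AcyOn G ({v | c v ≠ k} \ {v₀}) := by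
          refine acyOn_transfer (G' := Del G v₀) (A' := {v | c' v ≠ k}) ?_ ?_ (hacy' k)
          · rintro x y ⟨hx, hxv⟩ ⟨hy, hyv⟩ hxy
            exact ⟨hxy, hxv, hyv⟩
          · rintro x ⟨hx, hxv⟩
            show c' x ≠ k
            rw [← hcoff x hxv]
            exact hx
        rcases hcover k with hk | hk | hk
        · apply acyOn_pendant hbase
          intro x y hx hy hvx hvy
          have hxb : x = b := by
            rcases hadjv₀ x hvx with rfl | rfl
            · exact absurd (show c x = k by rw [hcoff x hav, hk]) hx
            · rfl
          have hyb : y = b := by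
            rcases hadjv₀ y hvy with rfl | rfl
            · exact absurd (show c y = k by rw [hcoff y hav, hk]) hy
            · rfl
          rw [hxb, hyb]
        · apply acyOn_pendant hbase
          intro x y hx hy hvx hvy
          have hxa : x = a := by
            rcases hadjv₀ x hvx with rfl | rfl
            · rfl
            · exact absurd (show c x = k by rw [hcoff x hbv, hk]) hx
          have hya : y = a := by
            rcases hadjv₀ y hvy with rfl | rfl
            · rfl
            · exact absurd (show c y = k by rw [hcoff y hbv, hk]) hy
          rw [hxa, hya]
        · have hset : {v | c v ≠ k} = {v | c v ≠ k} \ {v₀} := by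
            ext t
            constructor
            · intro ht
              refine ⟨ht, ?_⟩
              rintro rfl
              exact (show c t ≠ k from ht) (by rw [show c t = z from hcv, ← hk])
            · rintro ⟨ht, -⟩
              exact ht
          rw [hset]
          exact hbase
    · -- contract v₀ into a
      have hnadj := hadj
      have h4' : ¬ IsMinor (⊤ : SimpleGraph (Fin 4)) (Con G a v₀) :=
        fun hm => h4 (isMinor_con ha.symm hHK4 hm)
      obtain ⟨c', hproper', hacy'⟩ := IH (mu (Con G a v₀))
        (lt_of_lt_of_le (mu_con_lt ha.symm) hmu) V (Con G a v₀) le_rfl h4'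
      have hconab : (Con G a v₀).Adj a b := ⟨hab, Or.inr (Or.inl ⟨rfl, hb, hbv⟩)⟩
      have hc'ab : c' a ≠ c' b := hproper' a b hconab
      obtain ⟨z, hza, hzb, hcover⟩ := fin3_third _ _ hc'ab
      set c : V → Fin 3 := Function.update c' v₀ z with hcdef
      have hcoff : ∀ x, x ≠ v₀ → c x = c' x := fun x hx => Function.update_of_ne hx _ _
      have hcv : c v₀ = z := Function.update_self _ _ _
      refine ⟨c, ?_, ?_⟩
      · intro x y hxy
        by_cases hxv : x = v₀
        · subst hxv
          rw [hcv]
          rcases hadjv₀ y hxy with rfl | rfl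
          · rw [hcoff y hav]; exact hza
          · rw [hcoff y hbv]; exact hzb
        · by_cases hyv : y = v₀
          · subst hyv
            rw [hcv]
            rcases hadjv₀ x hxy.symm with rfl | rfl
            · rw [hcoff x hav]; exact hza.symm
            · rw [hcoff x hbv]; exact hzb.symm
          · rw [hcoff x hxv, hcoff y hyv]
            exact hproper' x y (con_adj_of_adj hxy hxv hyv)
      · intro k
        have hbase : AcyOn G ({v | c v ≠ k} \ {v₀}) := by
          refine acyOn_transfer (G' := Con G a v₀) (A' := {v | c' v ≠ k}) ?_ ?_ (hacy' k)
          · rintro x y ⟨hx, hxv⟩ ⟨hy, hyv⟩ hxy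
            exact con_adj_of_adj hxy hxv hyv
          · rintro x ⟨hx, hxv⟩
            show c' x ≠ k
            rw [← hcoff x hxv]
            exact hx
        rcases hcover k with hk | hk | hk
        · apply acyOn_pendant hbase
          intro x y hx hy hvx hvy
          have hxb : x = b := by
            rcases hadjv₀ x hvx with rfl | rfl
            · exact absurd (show c x = k by rw [hcoff x hav, hk]) hx
            · rfl
          have hyb : y = b := by
            rcases hadjv₀ y hvy with rfl | rfl
            · exact absurd (show c y = k by rw [hcoff y hav, hk]) hy
            · rfl
          rw [hxb, hyb]
        · apply acyOn_pendant hbase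
          intro x y hx hy hvx hvy
          have hxa : x = a := by
            rcases hadjv₀ x hvx with rfl | rfl
            · rfl
            · exact absurd (show c x = k by rw [hcoff x hbv, hk]) hx
          have hya : y = a := by
            rcases hadjv₀ y hvy with rfl | rfl
            · rfl
            · exact absurd (show c y = k by rw [hcoff y hbv, hk]) hy
          rw [hxa, hya]
        · have hset : {v | c v ≠ k} = {v | c v ≠ k} \ {v₀} := by
            ext t
            constructor
            · intro ht
              refine ⟨ht, ?_⟩
              rintro rfl
              exact (show c t ≠ k from ht) (by rw [show c t = z from hcv, ← hk])
            · rintro ⟨ht, -⟩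
              exact ht
          rw [hset]
          exact hbase

end Outerp


theorem outerplanar_independent_set_forest
    {V : Type} [Fintype V] (G : SimpleGraph V)
    (h4 : ¬ IsMinor (⊤ : SimpleGraph (Fin 4)) G)
    (h23 : ¬ IsMinor (completeBipartiteGraph (Fin 2) (Fin 3)) G)
    (u : V) :
    ∃ I : Set V, u ∈ I ∧ (∀ x ∈ I, ∀ y ∈ I, ¬ G.Adj x y) ∧
      (G.induce Iᶜ).IsAcyclic := by
  classical
  obtain ⟨c, hproper, hacy⟩ := Outerp.exists_good_coloring (Outerp.mu G) V G le_rfl h4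
  refine ⟨{x | c x = c u}, rfl, ?_, ?_⟩
  · intro x hx y hy hxy
    exact hproper x y hxy ((show c x = c u from hx).trans (show c y = c u from hy).symm)
  · intro v w hw
    have hinj : Function.Injective
        ⇑(SimpleGraph.Embedding.induce (G := G) ({x | c x = c u}ᶜ : Set V)).toHom := by
      intro p q hpq
      exact Subtype.ext hpq
    have hcyc := (SimpleGraph.Walk.map_isCycle_iff_of_injective hinj).2 hw
    apply hacy (c u) _ hcyc
    intro y hy
    rw [SimpleGraph.Walk.support_map] at hy
    obtain ⟨t, ht, rfl⟩ := List.mem_map.1 hy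
    exact t.2
end

section
/- Let G be a finite simple graph, let ℓ be a positive integer, and let γ_1 and γ_2 be proper ℓ-colorings of G. Define the digraph D_{γ1γ2} on vertex set V(G) with an arc from x to y whenever x and y are adjacent in G and γ_1(y) = γ_2(x). Then there exists a transformation from γ_1 to γ_2 in which each vertex of G is recolored at most once if and only if D_{γ1γ2} contains no dicycle. -/
open SimpleGraph

theorem transform_each_vertex_once_iff_no_dicycle
    {V : Type} [Fintype V] (G : SimpleGraph V)
    (ℓ : ℕ) (hℓ : 0 < ℓ) (γ₁ γ₂ : V → Fin ℓ)
    (h₁ : IsProperColoring G γ₁) (h₂ : IsProperColoring G γ₂) :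
    (∃ (m : ℕ) (c : Fin (m + 1) → V → Fin ℓ),
        IsTransformSeq G c γ₁ γ₂ ∧ ∀ v : V, RecolorCount c v ≤ 1) ↔
      ∀ x : V, ¬ Relation.TransGen (fun x y : V => G.Adj x y ∧ γ₁ y = γ₂ x) x x := by
  classical
  constructor
  · rintro ⟨m, c, ⟨hc0, hcl, hcp, hstep⟩, hcnt⟩ x hx
    -- a vertex not recolored before step j still has its initial color at j
    have before : ∀ (v : V) (j : Fin (m+1)),
        (∀ k : Fin m, (k : ℕ) < (j : ℕ) → c k.castSucc v = c k.succ v) → c j v = γ₁ v := by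
      intro v j
      induction j using Fin.induction with
      | zero => intro _; rw [hc0]
      | succ i ih =>
        intro h
        rw [← h i (by simp), ih (fun k hk => h k (by simp only [Fin.val_succ, Fin.coe_castSucc] at hk ⊢; omega))]
    have after : ∀ (v : V) (j : Fin (m+1)),
        (∀ k : Fin m, (j : ℕ) ≤ (k : ℕ) → c k.castSucc v = c k.succ v) → c j v = γ₂ v := by
      intro v j
      induction j using Fin.reverseInduction with
      | last => intro _; rw [hcl]
      | cast i ih =>
        intro h
        rw [h i (by simp), ih (fun k hk => h k (by simp only [Fin.val_succ, Fin.coe_castSucc] at hk ⊢; omega))]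
    have hsing : ∀ v : V, γ₁ v ≠ γ₂ v → ∃ t : Fin m,
        ∀ k : Fin m, c k.castSucc v ≠ c k.succ v ↔ k = t := by
      intro v hv
      have h1 : 1 ≤ RecolorCount c v := by
        rw [Nat.one_le_iff_ne_zero]
        intro h0
        have hemp := Finset.card_eq_zero.mp h0
        have hall : ∀ k : Fin m, c k.castSucc v = c k.succ v := by
          intro k
          by_contra hk
          have : k ∈ Finset.univ.filter fun i : Fin m => c i.castSucc v ≠ c i.succ v :=
            Finset.mem_filter.mpr ⟨Finset.mem_univ _, hk⟩
          rw [hemp] at this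
          exact absurd this (Finset.notMem_empty _)
        have hA : c (Fin.last m) v = γ₁ v := before v _ (fun k _ => hall k)
        have hB : c (Fin.last m) v = γ₂ v := by rw [hcl]
        exact hv (hA.symm.trans hB)
      obtain ⟨t, ht⟩ := Finset.card_eq_one.mp (le_antisymm (hcnt v) h1)
      refine ⟨t, fun k => ?_⟩
      rw [← Finset.mem_singleton, ← ht, Finset.mem_filter]
      simp
    set tN : V → ℕ := fun v =>
      ∑ i ∈ Finset.univ.filter (fun i : Fin m => c i.castSucc v ≠ c i.succ v), (i : ℕ) with htN
    have tNspec : ∀ (v : V) (t : Fin m),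
        (∀ k : Fin m, c k.castSucc v ≠ c k.succ v ↔ k = t) → tN v = t := by
      intro v t ht
      have : (Finset.univ.filter fun i : Fin m => c i.castSucc v ≠ c i.succ v) = {t} := by
        ext k
        simp [ht k]
      rw [htN]
      simp [this]
    have key : ∀ u w : V, G.Adj u w ∧ γ₁ w = γ₂ u → tN w < tN u := by
      rintro u w ⟨hadj, hcol⟩
      have hu : γ₁ u ≠ γ₂ u := fun h => h₁ hadj (h.trans hcol.symm)
      have hw : γ₁ w ≠ γ₂ w := fun h => h₂ hadj (hcol.symm.trans h)
      obtain ⟨tu, htu⟩ := hsing u hu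
      obtain ⟨tw, htw⟩ := hsing w hw
      rw [tNspec u tu htu, tNspec w tw htw]
      have hx2 : c tu.succ u = γ₂ u := by
        refine after u tu.succ (fun k hk => ?_)
        by_contra hne
        have hk' := (htu k).mp hne
        subst hk'
        simp [Fin.val_succ] at hk
      have hprop : c tu.succ w ≠ γ₁ w := by
        intro h
        exact hcp tu.succ hadj (by rw [hx2, h, hcol])
      by_contra hle
      push_neg at hle
      rcases eq_or_lt_of_le hle with heq | hlt
      · have he : tu = tw := Fin.ext heq
        obtain ⟨v₀, hv₀, huniq⟩ := hstep tu
        have hu' : c tu.castSucc u ≠ c tu.succ u := (htu tu).mpr rfl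
        have hw' : c tw.castSucc w ≠ c tw.succ w := (htw tw).mpr rfl
        rw [← he] at hw'
        exact hadj.ne ((huniq u hu').trans (huniq w hw').symm)
      · refine hprop (before w tu.succ (fun k hk => ?_))
        by_contra hne
        have hk' := (htw k).mp hne
        subst hk'
        simp only [Fin.val_succ] at hk
        omega
    have descent : ∀ a b : V,
        Relation.TransGen (fun x y : V => G.Adj x y ∧ γ₁ y = γ₂ x) a b → tN b < tN a := by
      intro a b h
      induction h with
      | single h => exact key _ _ h
      | tail _ h₃ ih => exact (key _ _ h₃).trans ih
    exact absurd (descent x x hx) (lt_irrefl _)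
  · intro hacyc
    set S : Finset V := Finset.univ.filter (fun v => γ₁ v ≠ γ₂ v) with hSdef
    have hmemS : ∀ v : V, v ∈ S ↔ γ₁ v ≠ γ₂ v := by
      intro v; rw [hSdef]; simp
    obtain ⟨L, lmono⟩ : ∃ L : LinearOrder V, ∀ a b : V,
        (a = b ∨ Relation.TransGen (fun x y : V => G.Adj x y ∧ γ₁ y = γ₂ x) b a) →
          L.le a b := by
      letI pre : PartialOrder V :=
        { le := fun a b => a = b ∨ Relation.TransGen (fun x y : V => G.Adj x y ∧ γ₁ y = γ₂ x) b a
          le_refl := fun a => Or.inl rfl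
          le_trans := by
            rintro a b c (rfl | h1) h2
            · exact h2
            · rcases h2 with rfl | h2
              · exact Or.inr h1
              · exact Or.inr (h2.trans h1)
          le_antisymm := by
            rintro a b (rfl | h1) h2
            · rfl
            · rcases h2 with rfl | h2
              · rfl
              · exact absurd (h1.trans h2) (hacyc b) }
      exact ⟨(inferInstance : LinearOrder (LinearExtension V)),
        fun a b h => (toLinearExtension (α := V)).monotone h⟩
    letI := L
    have hlt : ∀ u w : V, G.Adj u w → γ₁ w = γ₂ u → w < u := by
      intro u w hadj hcol
      exact lt_of_le_of_ne
        (lmono w u (Or.inr (Relation.TransGen.single ⟨hadj, hcol⟩))) hadj.ne'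
    set m := S.card with hm
    set e := S.orderIsoOfFin hm.symm with he
    set pos : V → ℕ := fun v => if h : v ∈ S then ((e.symm ⟨v, h⟩ : Fin m) : ℕ) else m
      with hpos
    have hpos_lt : ∀ v ∈ S, pos v < m := by
      intro v hv
      rw [hpos]
      simp only [dif_pos hv]
      exact (e.symm ⟨v, hv⟩).isLt
    have hpos_e : ∀ i : Fin m, pos ((e i : {x // x ∈ S}) : V) = i := by
      intro i
      rw [hpos]
      simp only [dif_pos (e i).2, Subtype.coe_eta, OrderIso.symm_apply_apply]
    have hpos_inj : ∀ (i : Fin m) (v : V), pos v = (i : ℕ) → v = ((e i : {x // x ∈ S}) : V) := by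
      intro i v hv
      have hvS : v ∈ S := by
        by_contra hvn
        rw [hpos] at hv
        simp only [dif_neg hvn] at hv
        have := i.isLt
        omega
      rw [hpos] at hv
      simp only [dif_pos hvS] at hv
      have hh : e.symm ⟨v, hvS⟩ = i := Fin.ext hv
      rw [← hh, e.apply_symm_apply]
    have harc : ∀ u w : V, G.Adj u w → γ₁ w = γ₂ u → pos w < pos u := by
      intro u w hadj hcol
      have hwS : w ∈ S := (hmemS w).mpr (fun h => h₂ hadj (hcol.symm.trans h))
      have huS : u ∈ S := (hmemS u).mpr (fun h => h₁ hadj (h.trans hcol.symm))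
      have hlt' : w < u := hlt u w hadj hcol
      have hsub : e.symm ⟨w, hwS⟩ < e.symm ⟨u, huS⟩ :=
        (OrderIso.lt_iff_lt e.symm).mpr (Subtype.mk_lt_mk.mpr hlt')
      rw [hpos]
      simp only [dif_pos hwS, dif_pos huS]
      exact hsub
    set c : Fin (m+1) → V → Fin ℓ := fun i v => if pos v < (i : ℕ) then γ₂ v else γ₁ v with hc
    have hstep_eq : ∀ (k : Fin m) (v : V), c k.castSucc v ≠ c k.succ v → pos v = (k : ℕ) := by
      intro k v hv
      by_contra hne
      apply hv
      rw [hc]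
      simp only [Fin.coe_castSucc, Fin.val_succ]
      rcases Nat.lt_trichotomy (pos v) (k : ℕ) with h | h | h
      · rw [if_pos h, if_pos (h.trans (Nat.lt_succ_self _))]
      · exact absurd h hne
      · rw [if_neg (by omega), if_neg (by omega)]
    refine ⟨m, c, ⟨?_, ?_, ?_, ?_⟩, ?_⟩
    · funext v
      rw [hc]
      simp
    · funext v
      rw [hc]
      simp only [Fin.val_last]
      by_cases hv : v ∈ S
      · rw [if_pos (hpos_lt v hv)]
      · rw [if_neg (by rw [hpos]; simp [dif_neg hv])]
        exact not_not.mp (fun h => hv ((hmemS v).mpr h))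
    · intro i u w hadj
      rw [hc]
      simp only
      split_ifs with hA hB hB
      · exact h₂ hadj
      · intro heq
        exact hB ((harc u w hadj heq.symm).trans hA)
      · intro heq
        exact hA ((harc w u hadj.symm heq).trans hB)
      · exact h₁ hadj
    · intro i
      refine ⟨((e i : {x // x ∈ S}) : V), ?_, ?_⟩
      · have hA : c i.castSucc ((e i : {x // x ∈ S}) : V) = γ₁ ((e i : {x // x ∈ S}) : V) := by
          rw [hc]; simp only [Fin.coe_castSucc]
          rw [if_neg (by rw [hpos_e]; exact lt_irrefl _)]
        have hB : c i.succ ((e i : {x // x ∈ S}) : V) = γ₂ ((e i : {x // x ∈ S}) : V) := by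
          rw [hc]; simp only [Fin.val_succ]
          rw [if_pos (by rw [hpos_e]; exact Nat.lt_succ_self _)]
        show c i.castSucc ((e i : {x // x ∈ S}) : V) ≠ c i.succ ((e i : {x // x ∈ S}) : V)
        rw [hA, hB]
        exact (hmemS _).mp (e i).2
      · intro v hv
        exact hpos_inj i v (hstep_eq i v hv)
    · intro v
      refine Finset.card_le_one.mpr ?_
      intro a ha b hb
      have ha' := hstep_eq a v (Finset.mem_filter.mp ha).2
      have hb' := hstep_eq b v (Finset.mem_filter.mp hb).2
      exact Fin.ext (ha'.symm.trans hb')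
end

section
/- Let ℓ ≥ 6 and q ≤ 3 be integers, let H be the complete graph K_4 on vertices v_1, v_2, v_3, v_4, and let c_0, c_1, …, c_q be a prescribed sequence of colors for v_4 with c_i ≠ c_{i+1} for each i. Then for every pair of proper ℓ-colorings α' and β' of H with α'(v_4) = c_0 and β'(v_4) = c_q, there exists a transformation from α' to β' recoloring each vertex at most 3 times in which v_4 follows the prescribed coloring order c_0, c_1, …, c_q. -/
open SimpleGraph

/-- Every edge of `G` lies on at most one cycle: two cycles sharing an edge have the
same edge set. -/
def EdgeOnAtMostOneCycle {V : Type} (G : SimpleGraph V) : Prop :=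
  ∀ (u v : V) (p : G.Walk u u) (q : G.Walk v v), p.IsCycle → q.IsCycle →
    ∀ e, e ∈ p.edges → e ∈ q.edges → ∀ e', (e' ∈ p.edges ↔ e' ∈ q.edges)

/-- A cactus graph: connected and every edge lies on at most one cycle. -/
def IsCactus {V : Type} (G : SimpleGraph V) : Prop :=
  G.Connected ∧ EdgeOnAtMostOneCycle G

/-- A chordal graph: every cycle of length at least `4` has a chord; equivalently,
there is no induced cycle of length at least `4`. -/
def IsChordal {V : Type} (G : SimpleGraph V) : Prop :=
  ∀ (v : V) (p : G.Walk v v), p.IsCycle → 4 ≤ p.length →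
    ∃ u w, u ∈ p.support ∧ w ∈ p.support ∧ G.Adj u w ∧ s(u, w) ∉ p.edges

/-- The sequence of successive colors taken by the vertex `v` along the sequence `c`
(its starting color followed by the new color at each of its recolorings). -/
def ColorTrace {V : Type} {ℓ m : ℕ} (c : Fin (m + 1) → V → Fin ℓ) (v : V) : List (Fin ℓ) :=
  (List.ofFn fun i : Fin (m + 1) => c i v).destutter (· ≠ ·)

/-!
Proper colorings of `K₄` are the injective maps `Fin 4 → Fin ℓ`, and a single recoloring keeps a
coloring proper exactly when the new color is unused. Vertex `3` walks through `c₁, …, c_q`; before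
each step the vertex holding the next color is evicted to a color that is unused and differs from
the color after next, which exists because `ℓ ≥ 4 + 1 + 1`. Hence no vertex is evicted at two
consecutive steps, so for `q ≤ 3` every other vertex moves at most once during the walk, except the
initial holder of `c₁`, which may move twice. Then vertex `3` has its final color and the other
three are rearranged: first that vertex `s` takes `β s`, evicting its holder; the remaining two
need one move each, plus one parking move in case they must swap colors, and this extra move is
given to the one that was not evicted.
-/

open Function

namespace Recoloring

variable {V : Type} {ℓ : ℕ}

lemma isProperColoring_top_iff {c : V → Fin ℓ} :
    IsProperColoring (⊤ : SimpleGraph V) c ↔ Injective c :=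
  ⟨fun h u v huv => by_contra fun hne => h ((top_adj u v).2 hne) huv,
    fun h u v huv => h.ne ((top_adj u v).1 huv)⟩

lemma exists_fresh_color [Fintype V] {F : Finset (Fin ℓ)} (hℓ : Fintype.card V + F.card < ℓ)
    (γ : V → Fin ℓ) : ∃ f, f ∉ Set.range γ ∧ f ∉ F := by
  by_contra! h
  have hcover : (Finset.univ : Finset (Fin ℓ)) ⊆ Finset.univ.image γ ∪ F := fun f _ => by
    by_cases hf : f ∈ F
    · exact Finset.mem_union_right _ hf
    · obtain ⟨v, rfl⟩ := not_not.1 (mt (h f) hf)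
      exact Finset.mem_union_left _ (Finset.mem_image_of_mem γ (Finset.mem_univ v))
  have := (Finset.card_le_card hcover).trans (Finset.card_union_le _ _)
  have := Finset.card_image_le (s := Finset.univ) (f := γ)
  simp only [Finset.card_univ, Fintype.card_fin] at *
  omega

section Sequences

variable {G : SimpleGraph V} {m : ℕ}

lemma isTransformSeq_const {γ : V → Fin ℓ} (hγ : IsProperColoring G γ) :
    IsTransformSeq G (fun _ : Fin 1 => γ) γ γ :=
  ⟨rfl, rfl, fun _ => hγ, fun i => i.elim0⟩

lemma isTransformSeq_cons {c : Fin (m + 1) → V → Fin ℓ} {γ δ β : V → Fin ℓ}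
    (hc : IsTransformSeq G c δ β) (hγ : IsProperColoring G γ) (hstep : ∃! v, γ v ≠ δ v) :
    IsTransformSeq G (Fin.cons γ c : Fin (m + 2) → V → Fin ℓ) γ β := by
  obtain ⟨hc0, hlast, hproper, hsteps⟩ := hc
  refine ⟨rfl, by simpa [← Fin.succ_last] using hlast, Fin.cases hγ hproper,
    Fin.cases ?_ fun i => ?_⟩
  · simpa [hc0] using hstep
  · simpa [← Fin.succ_castSucc] using hsteps i

lemma recolorCount_cons (c : Fin (m + 1) → V → Fin ℓ) (γ : V → Fin ℓ) (v : V) :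
    RecolorCount (Fin.cons γ c : Fin (m + 2) → V → Fin ℓ) v =
      RecolorCount c v + if γ v ≠ c 0 v then 1 else 0 := by
  rw [RecolorCount, Fin.card_filter_univ_succ', add_comm]
  simp [RecolorCount]

lemma colorTrace_cons (c : Fin (m + 1) → V → Fin ℓ) (γ : V → Fin ℓ) (v : V) :
    ColorTrace (Fin.cons γ c : Fin (m + 2) → V → Fin ℓ) v =
      if γ v = c 0 v then ColorTrace c v else γ v :: ColorTrace c v := by
  simp only [ColorTrace, List.ofFn_succ (n := m + 1), Fin.cons_zero, Fin.cons_succ]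
  rw [List.ofFn_succ, List.destutter_cons_cons, List.destutter_cons']
  split_ifs with h <;> simp_all

end Sequences

section Moves

variable [DecidableEq V]

def applyMoves (γ : V → Fin ℓ) (ms : List (V × Fin ℓ)) : V → Fin ℓ :=
  ms.foldl (fun c m => update c m.1 m.2) γ

/-- On a complete graph a move keeps the coloring proper and changes it exactly when its new
color is not in use. -/
def ValidMoves : (V → Fin ℓ) → List (V × Fin ℓ) → Prop
  | _, [] => True
  | γ, m :: ms => m.2 ∉ Set.range γ ∧ ValidMoves (update γ m.1 m.2) ms

def newColors (v : V) (ms : List (V × Fin ℓ)) : List (Fin ℓ) :=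
  (ms.filter (·.1 = v)).map Prod.snd

variable {γ : V → Fin ℓ} {m : V × Fin ℓ} {ms ms' : List (V × Fin ℓ)}

@[simp] lemma applyMoves_nil : applyMoves γ [] = γ := rfl

@[simp] lemma applyMoves_cons : applyMoves γ (m :: ms) = applyMoves (update γ m.1 m.2) ms := rfl

@[simp] lemma applyMoves_append : applyMoves γ (ms ++ ms') = applyMoves (applyMoves γ ms) ms' :=
  List.foldl_append

@[simp] lemma validMoves_nil : ValidMoves γ [] := trivial

@[simp] lemma validMoves_cons :
    ValidMoves γ (m :: ms) ↔ m.2 ∉ Set.range γ ∧ ValidMoves (update γ m.1 m.2) ms := Iff.rfl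

lemma validMoves_append :
    ValidMoves γ (ms ++ ms') ↔ ValidMoves γ ms ∧ ValidMoves (applyMoves γ ms) ms' := by
  induction ms generalizing γ with
  | nil => simp
  | cons m ms ih => simp [ih, and_assoc]

@[simp] lemma newColors_nil (v : V) : newColors v ([] : List (V × Fin ℓ)) = [] := rfl

@[simp] lemma newColors_cons (v : V) :
    newColors v (m :: ms) = if m.1 = v then m.2 :: newColors v ms else newColors v ms := by
  by_cases h : m.1 = v <;> simp [newColors, h]

@[simp] lemma newColors_append (v : V) :
    newColors v (ms ++ ms') = newColors v ms ++ newColors v ms' := by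
  simp [newColors]

lemma _root_.Function.Injective.update_of_notMem_range (hγ : Injective γ) (v : V) {t : Fin ℓ}
    (ht : t ∉ Set.range γ) : Injective (update γ v t) := by
  intro x y hxy
  by_cases hx : x = v <;> by_cases hy : y = v <;>
    simp_all [hγ.eq_iff, eq_comm (a := t)]

lemma _root_.Function.Injective.applyMoves (hγ : Injective γ) (hms : ValidMoves γ ms) :
    Injective (applyMoves γ ms) := by
  induction ms generalizing γ with
  | nil => exact hγ
  | cons m ms ih => exact ih (hγ.update_of_notMem_range m.1 hms.1) hms.2

lemma applyMoves_apply_eq_getLast (v : V) :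
    applyMoves γ ms v = (γ v :: newColors v ms).getLast (List.cons_ne_nil _ _) := by
  induction ms generalizing γ with
  | nil => rfl
  | cons m ms ih =>
    by_cases h : m.1 = v
    · simp [ih, h]
    · simp [ih, h, update_of_ne (Ne.symm h)]

theorem exists_isTransformSeq_top (hγ : Injective γ) (hms : ValidMoves γ ms) :
    ∃ c : Fin (ms.length + 1) → V → Fin ℓ,
      IsTransformSeq ⊤ c γ (applyMoves γ ms) ∧
      ∀ v, RecolorCount c v = (newColors v ms).length ∧ ColorTrace c v = γ v :: newColors v ms := by
  induction ms generalizing γ with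
  | nil =>
    refine ⟨fun _ => γ, isTransformSeq_const (isProperColoring_top_iff.2 hγ), fun v => ?_⟩
    simp [RecolorCount, ColorTrace]
  | cons m ms ih =>
    obtain ⟨hfresh, hms⟩ := hms
    obtain ⟨c, hc, hcv⟩ := ih (hγ.update_of_notMem_range m.1 hfresh) hms
    have hc0 : c 0 = update γ m.1 m.2 := hc.1
    have hmoved : ∀ v, γ v ≠ update γ m.1 m.2 v ↔ m.1 = v := fun v => by
      by_cases h : m.1 = v
      · subst h; simpa [eq_comm] using fun h' => hfresh ⟨_, h'⟩
      · simp [h, update_of_ne (Ne.symm h)]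
    refine ⟨Fin.cons γ c, isTransformSeq_cons hc (isProperColoring_top_iff.2 hγ)
      ⟨m.1, (hmoved _).2 rfl, fun v hv => ((hmoved v).1 (hc0 ▸ hv)).symm⟩, fun v => ?_⟩
    rw [recolorCount_cons, colorTrace_cons, hc0, (hcv v).1, (hcv v).2]
    by_cases h : m.1 = v
    · subst h; simpa using fun h' => hfresh ⟨_, h'⟩
    · simp [h, update_of_ne (Ne.symm h)]

end Moves

section CompleteGraph

variable [DecidableEq V] {γ β : V → Fin ℓ}

lemma exists_validMoves_settle {v : V} {t : Fin ℓ} (hfree : ∀ u ≠ v, γ u ≠ t) :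
    ∃ ms, ValidMoves γ ms ∧ applyMoves γ ms = update γ v t ∧
      (newColors v ms).length ≤ 1 ∧ ∀ u ≠ v, newColors u ms = [] := by
  by_cases hv : γ v = t
  · exact ⟨[], trivial, by simp [← hv], by simp, fun _ _ => rfl⟩
  · refine ⟨[(v, t)], ⟨?_, trivial⟩, rfl, by simp, fun u hu => by simp [Ne.symm hu]⟩
    rintro ⟨u, rfl⟩
    exact hfree u (fun h => hv (h ▸ rfl)) rfl

lemma exists_validMoves_pair_of_ne (hβ : Injective β) {a b : V} (hab : a ≠ b)
    (hoff : ∀ v, v ≠ a → v ≠ b → γ v = β v) (hγab : γ a ≠ β b) :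
    ∃ ms, ValidMoves γ ms ∧ applyMoves γ ms = β ∧
      (newColors a ms).length ≤ 1 ∧ (newColors b ms).length ≤ 1 ∧
      ∀ v, v ≠ a → v ≠ b → newColors v ms = [] := by
  obtain ⟨ms₁, hv₁, ha₁, hb₁, h₁⟩ := exists_validMoves_settle
    (γ := γ) (v := b) (t := β b) fun u hu => by
    by_cases hua : u = a
    · exact hua ▸ hγab
    · rw [hoff u hua hu]; exact hβ.ne hu
  obtain ⟨ms₂, hv₂, ha₂, hb₂, h₂⟩ := exists_validMoves_settle
    (γ := applyMoves γ ms₁) (v := a) (t := β a) fun u hu => by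
    rw [ha₁]
    by_cases hub : u = b
    · subst hub; simpa using hβ.ne hab.symm
    · rw [update_of_ne hub, hoff u hu hub]; exact hβ.ne hu
  refine ⟨ms₁ ++ ms₂, validMoves_append.2 ⟨hv₁, hv₂⟩, ?_, ?_, ?_, fun v hva hvb => ?_⟩
  · rw [applyMoves_append, ha₂, ha₁]
    ext1 v
    by_cases hva : v = a; · simp [hva]
    by_cases hvb : v = b; · simp [hvb, hab.symm]
    simp [hva, hvb, hoff v hva hvb]
  · simp [h₁ a hab, hb₂]
  · simp [h₂ b hab.symm, hb₁]
  · simp [h₁ v hvb, h₂ v hva]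

variable [Fintype V]

lemma exists_validMoves_pair (hℓ : Fintype.card V < ℓ) (hβ : Injective β) {a b : V} (hab : a ≠ b)
    (hoff : ∀ v, v ≠ a → v ≠ b → γ v = β v) :
    ∃ ms, ValidMoves γ ms ∧ applyMoves γ ms = β ∧
      (newColors a ms).length ≤ 2 ∧ (newColors b ms).length ≤ 1 ∧
      ∀ v, v ≠ a → v ≠ b → newColors v ms = [] := by
  by_cases hγab : γ a = β b
  swap
  · obtain ⟨ms, hv, happ, ha, hb, hrest⟩ := exists_validMoves_pair_of_ne hβ hab hoff hγab
    exact ⟨ms, hv, happ, ha.trans (by norm_num), hb, hrest⟩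
  obtain ⟨f, hf, -⟩ := exists_fresh_color (F := ∅) (by simpa using hℓ) γ
  obtain ⟨ms, hv, happ, ha, hb, hrest⟩ := exists_validMoves_pair_of_ne (γ := update γ a f) hβ hab
    (fun v hva hvb => by rw [update_of_ne hva, hoff v hva hvb])
    (by rw [update_self, ← hγab]; exact fun h => hf ⟨a, h.symm⟩)
  refine ⟨(a, f) :: ms, ⟨hf, hv⟩, happ, ?_, ?_, fun v hva hvb => ?_⟩
  · simp only [newColors_cons, if_true, List.length_cons]; omega
  · simpa [hab] using hb
  · simpa [Ne.symm hva] using hrest v hva hvb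

/-- Recolor `w` with `t`, first evicting the vertex holding `t` (if any) to a color outside `F`. -/
lemma exists_validMoves_recolor {F : Finset (Fin ℓ)} (hℓ : Fintype.card V + F.card < ℓ)
    (hγ : Injective γ) {w : V} {t : Fin ℓ} (ht : γ w ≠ t) :
    ∃ ms, ValidMoves γ ms ∧ applyMoves γ ms w = t ∧ newColors w ms = [t] ∧
      ∀ u ≠ w, (newColors u ms).length ≤ 1 ∧ (γ u = t → applyMoves γ ms u ∉ F) ∧
        (γ u ≠ t → newColors u ms = [] ∧ applyMoves γ ms u = γ u) := by
  by_cases hheld : ∃ h, γ h = t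
  · obtain ⟨h, rfl⟩ := hheld
    have hhw : h ≠ w := fun e => ht (e ▸ rfl)
    obtain ⟨f, hf, hfF⟩ := exists_fresh_color hℓ γ
    refine ⟨[(h, f), (w, γ h)], ⟨hf, ?_, trivial⟩, by simp, by simp [hhw], fun u hu => ?_⟩
    · rintro ⟨x, hx⟩
      by_cases hxh : x = h
      · subst hxh; exact hf ⟨x, by simpa using hx.symm⟩
      · exact hxh (hγ (by simpa [hxh] using hx))
    · by_cases huh : u = h
      · subst huh; simp [Ne.symm hu, update_of_ne hu, hfF]
      · simp [Ne.symm hu, update_of_ne hu, update_of_ne huh, Ne.symm huh, hγ.ne huh]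
  · rw [not_exists] at hheld
    refine ⟨[(w, t)], ⟨fun ⟨u, hu⟩ => hheld u hu, trivial⟩, by simp, by simp,
      fun u hu => ?_⟩
    simp [hu, Ne.symm hu, hheld u]

theorem exists_validMoves_walk (hℓ : Fintype.card V + 1 < ℓ) (w : V) :
    ∀ (ts : List (Fin ℓ)) (γ : V → Fin ℓ), Injective γ → (γ w :: ts).IsChain (· ≠ ·) →
      ∃ ms, ValidMoves γ ms ∧ newColors w ms = ts ∧
        ∀ u ≠ w, 2 * (newColors u ms).length ≤ ts.length + if ts.head? = some (γ u) then 1 else 0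
  | [], γ, _, _ => ⟨[], trivial, rfl, fun _ _ => by simp⟩
  | t :: ts, γ, hγ, hchain => by
    obtain ⟨ht, hchain⟩ := List.isChain_cons_cons.1 hchain
    -- the evicted vertex avoids the next target, so it is never evicted twice in a row
    have hF : ts.head?.toFinset.card ≤ 1 := by cases ts.head? <;> simp
    obtain ⟨ms₁, hv₁, hw₁, hnew₁, hu₁⟩ :=
      exists_validMoves_recolor (F := ts.head?.toFinset) (by omega) hγ ht
    obtain ⟨ms₂, hv₂, hnew₂, hu₂⟩ := exists_validMoves_walk hℓ w ts (applyMoves γ ms₁)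
      (hγ.applyMoves hv₁) (hw₁ ▸ hchain)
    refine ⟨ms₁ ++ ms₂, validMoves_append.2 ⟨hv₁, hv₂⟩, by simp [hnew₁, hnew₂], fun u hu => ?_⟩
    obtain ⟨hle, hout, hstay⟩ := hu₁ u hu
    have h₂ := hu₂ u hu
    simp only [newColors_append, List.length_append, List.length_cons, List.head?_cons,
      Option.some.injEq]
    by_cases hut : γ u = t
    · have : ts.head? ≠ some (applyMoves γ ms₁ u) := fun h => hout hut (by simp [h])
      simp only [if_neg this, hut, if_true] at h₂ ⊢
      omega
    · obtain ⟨hnil, hfix⟩ := hstay hut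
      simp only [hnil, hfix, Ne.symm hut, if_false, List.length_nil] at h₂ ⊢
      split_ifs at h₂ <;> omega

theorem exists_validMoves_three (hℓ : Fintype.card V < ℓ) (hγ : Injective γ) (hβ : Injective β)
    {s a b : V} (hsa : s ≠ a) (hsb : s ≠ b) (hab : a ≠ b)
    (hoff : ∀ v, v ≠ s → v ≠ a → v ≠ b → γ v = β v) :
    ∃ ms, ValidMoves γ ms ∧ applyMoves γ ms = β ∧ (newColors s ms).length ≤ 1 ∧
      (newColors a ms).length ≤ 2 ∧ (newColors b ms).length ≤ 2 ∧
      ∀ v, v ≠ s → v ≠ a → v ≠ b → newColors v ms = [] := by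
  -- only the holder of `β s` gets evicted when `s` is settled; the double move goes to another
  wlog ha : γ a ≠ β s generalizing a b
  · obtain ⟨ms, hv, happ, hs, hb, ha, hrest⟩ := this hsb hsa hab.symm
      (fun v hvs hvb hva => hoff v hvs hva hvb)
      (fun hb => hab (hγ ((not_not.1 ha).trans hb.symm)))
    exact ⟨ms, hv, happ, hs, ha, hb, fun v hvs hva hvb => hrest v hvs hvb hva⟩
  by_cases hs : γ s = β s
  · obtain ⟨ms, hv, happ, ha, hb, hrest⟩ := exists_validMoves_pair hℓ hβ hab fun v hva hvb => by
      by_cases hvs : v = s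
      · exact hvs ▸ hs
      · exact hoff v hvs hva hvb
    exact ⟨ms, hv, happ, by simp [hrest s hsa hsb], ha, hb.trans (by norm_num),
      fun v _ => hrest v⟩
  obtain ⟨ms₁, hv₁, hs₁, hnew₁, hu₁⟩ :=
    exists_validMoves_recolor (F := ∅) (by simpa using hℓ) hγ hs
  have hfix₁ : ∀ v, v ≠ s → v ≠ a → v ≠ b →
      newColors v ms₁ = [] ∧ applyMoves γ ms₁ v = β v := fun v hvs hva hvb => by
    rw [← hoff v hvs hva hvb]
    exact (hu₁ v hvs).2.2 (hoff v hvs hva hvb ▸ hβ.ne hvs)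
  obtain ⟨ms₂, hv₂, happ₂, ha₂, hb₂, hrest₂⟩ := exists_validMoves_pair (γ := applyMoves γ ms₁)
    hℓ hβ hab fun v hva hvb => by
      by_cases hvs : v = s
      · exact hvs ▸ hs₁
      · exact (hfix₁ v hvs hva hvb).2
  refine ⟨ms₁ ++ ms₂, validMoves_append.2 ⟨hv₁, hv₂⟩, by rw [applyMoves_append, happ₂],
    ?_, ?_, ?_, fun v hvs hva hvb => ?_⟩
  · simp [hnew₁, hrest₂ s hsa hsb]
  · simpa [((hu₁ a hsa.symm).2.2 ha).1] using ha₂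
  · have := (hu₁ b hsb.symm).1
    simp only [newColors_append, List.length_append]
    omega
  · simp [(hfix₁ v hvs hva hvb).1, hrest₂ v hva hvb]

end CompleteGraph

theorem exists_validMoves_fin_four (hℓ : 6 ≤ ℓ) {α β : Fin 4 → Fin ℓ} (hα : Injective α)
    (hβ : Injective β) {ts : List (Fin ℓ)} (hlen : ts.length ≤ 3)
    (hchain : (α 3 :: ts).IsChain (· ≠ ·))
    (hlast : (α 3 :: ts).getLast (List.cons_ne_nil _ _) = β 3) :
    ∃ ms, ValidMoves α ms ∧ applyMoves α ms = β ∧ newColors 3 ms = ts ∧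
      ∀ v, (newColors v ms).length ≤ 3 := by
  obtain ⟨walk, hwalk, hw3, hwu⟩ := exists_validMoves_walk (by simp; omega) 3 ts α hα hchain
  have hγ3 : applyMoves α walk 3 = β 3 := by rw [applyMoves_apply_eq_getLast, hw3, hlast]
  -- the holder of the first target may be evicted twice by the walk, so it moves once afterwards
  obtain ⟨s, hs3, hs⟩ : ∃ s ≠ (3 : Fin 4), ∀ u ≠ 3, ts.head? = some (α u) → u = s := by
    by_cases h : ∃ u ≠ (3 : Fin 4), ts.head? = some (α u)
    · obtain ⟨u, hu3, hu⟩ := h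
      exact ⟨u, hu3, fun u' _ hu' => hα (Option.some_injective _ (hu'.symm.trans hu))⟩
    · exact ⟨0, by decide, fun u hu3 hu => (h ⟨u, hu3, hu⟩).elim⟩
  have hsplit : ∀ s : Fin 4, s ≠ 3 → ∃ a b, s ≠ a ∧ s ≠ b ∧ a ≠ b ∧ a ≠ 3 ∧ b ≠ 3 ∧
      ∀ v, v = s ∨ v = a ∨ v = b ∨ v = 3 := by decide
  obtain ⟨a, b, hsa, hsb, hab, ha3, hb3, hcover⟩ := hsplit s hs3
  obtain ⟨fin, hfin, happ, hs₂, ha₂, hb₂, hrest₂⟩ := exists_validMoves_three (by simp; omega)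
    (hα.applyMoves hwalk) hβ hsa hsb hab fun v hvs hva hvb => by
      obtain rfl : v = 3 := by grind
      exact hγ3
  have hfin3 := hrest₂ 3 hs3.symm ha3.symm hb3.symm
  refine ⟨walk ++ fin, validMoves_append.2 ⟨hwalk, hfin⟩, by rw [applyMoves_append, happ],
    by rw [newColors_append, hw3, hfin3, List.append_nil], fun v => ?_⟩
  rw [newColors_append, List.length_append]
  rcases hcover v with rfl | rfl | rfl | rfl
  · have := hwu v hs3
    split_ifs at this <;> omega
  · have := hwu v ha3
    rw [if_neg fun h => hsa (hs v ha3 h).symm] at this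
    omega
  · have := hwu v hb3
    rw [if_neg fun h => hsb (hs v hb3 h).symm] at this
    omega
  · simp [hw3, hfin3, hlen]

end Recoloring

open Recoloring

theorem k4_prescribed_order_recolor_six_colors
    (ℓ q : ℕ) (hℓ : 6 ≤ ℓ) (hq : q ≤ 3)
    (cs : Fin (q + 1) → Fin ℓ) (hcs : ∀ i : Fin q, cs i.castSucc ≠ cs i.succ)
    (α β : Fin 4 → Fin ℓ)
    (hα : IsProperColoring (⊤ : SimpleGraph (Fin 4)) α)
    (hβ : IsProperColoring (⊤ : SimpleGraph (Fin 4)) β)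
    (hα4 : α 3 = cs 0) (hβ4 : β 3 = cs (Fin.last q)) :
    ∃ (m : ℕ) (c : Fin (m + 1) → Fin 4 → Fin ℓ),
      IsTransformSeq (⊤ : SimpleGraph (Fin 4)) c α β ∧
      (∀ v : Fin 4, RecolorCount c v ≤ 3) ∧
      ColorTrace c (3 : Fin 4) = List.ofFn cs := by
  rw [isProperColoring_top_iff] at hα hβ
  have hcs' : α 3 :: List.ofFn (fun i : Fin q => cs i.succ) = List.ofFn cs := by
    rw [List.ofFn_succ, hα4]
  obtain ⟨ms, hms, happ, h3, hcount⟩ := exists_validMoves_fin_four hℓ hα hβ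
    (by simpa using hq) (hcs' ▸ List.isChain_ofFn.2 fun i hi => hcs ⟨i, by omega⟩)
    (by simp only [hcs', List.getLast_ofFn_succ, hβ4])
  obtain ⟨c, hc, hcv⟩ := exists_isTransformSeq_top hα hms
  exact ⟨_, c, happ ▸ hc, fun v => (hcv v).1 ▸ hcount v, by rw [(hcv 3).2, h3, hcs']⟩
end

section
/- Let G be a cycle graph on n ≥ 3 vertices and let ℓ ≥ 4 be an integer. Then for every pair of proper ℓ-colorings α and β of G there exists a transformation from α to β recoloring each vertex at most 3 times. -/
open SimpleGraph

section General
variable {V : Type} [DecidableEq V] {ℓ : ℕ} (G : SimpleGraph V)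

def applyMoves : List (V × Fin ℓ) → (V → Fin ℓ) → (V → Fin ℓ)
  | [], γ => γ
  | p :: L, γ => applyMoves L (Function.update γ p.1 p.2)

def ValidMoves : (V → Fin ℓ) → List (V × Fin ℓ) → Prop
  | _, [] => True
  | γ, p :: L => (∀ u, G.Adj p.1 u → p.2 ≠ γ u) ∧ ValidMoves (Function.update γ p.1 p.2) L

lemma proper_update {γ : V → Fin ℓ} (hγ : IsProperColoring G γ) {v : V} {c : Fin ℓ}
    (h : ∀ u, G.Adj v u → c ≠ γ u) : IsProperColoring G (Function.update γ v c) := by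
  intro x y hxy
  rcases eq_or_ne x v with rfl | hx
  · rw [Function.update_self, Function.update_of_ne (G.ne_of_adj hxy).symm]
    exact h y hxy
  · rw [Function.update_of_ne hx]
    rcases eq_or_ne y v with rfl | hy
    · rw [Function.update_self]; exact fun hh => h x (G.adj_symm hxy) hh.symm
    · rw [Function.update_of_ne hy]; exact hγ hxy

lemma exists_transform (L : List (V × Fin ℓ)) :
    ∀ γ : V → Fin ℓ, IsProperColoring G γ → ValidMoves G γ L →
    ∃ m, ∃ c : Fin (m + 1) → V → Fin ℓ,
      IsTransformSeq G c γ (applyMoves L γ) ∧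
      ∀ v, RecolorCount c v ≤ L.countP (fun p => decide (p.1 = v)) := by
  induction L with
  | nil =>
    intro γ hγ _
    refine ⟨0, fun _ => γ, ⟨rfl, rfl, fun _ => hγ, fun i => i.elim0⟩, fun v => ?_⟩
    simp [RecolorCount]
  | cons p L ih =>
    intro γ hγ hL
    obtain ⟨hval, hL'⟩ := hL
    have hγ' : IsProperColoring G (Function.update γ p.1 p.2) := proper_update G hγ hval
    obtain ⟨m, c, ⟨hc0, hclast, hcprop, hcstep⟩, hcount⟩ := ih _ hγ' hL'
    by_cases hchange : p.2 = γ p.1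
    · have heq : Function.update γ p.1 p.2 = γ := by rw [hchange]; exact Function.update_eq_self _ _
      refine ⟨m, c, ⟨by rw [hc0, heq], ?_, hcprop, hcstep⟩, fun v => ?_⟩
      · show c (Fin.last m) = applyMoves L (Function.update γ p.1 p.2)
        exact hclast
      · calc RecolorCount c v ≤ L.countP (fun p => decide (p.1 = v)) := hcount v
          _ ≤ (p :: L).countP (fun p => decide (p.1 = v)) := by
            rw [List.countP_cons]; omega
    · refine ⟨m + 1, Fin.cons γ c, ⟨Fin.cons_zero _ _, ?_, ?_, ?_⟩, fun v => ?_⟩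
      · rw [← Fin.succ_last, Fin.cons_succ]
        exact hclast
      · intro i
        induction i using Fin.cases with
        | zero => simpa using hγ
        | succ j => simpa using hcprop j
      · intro i
        induction i using Fin.cases with
        | zero =>
          have e1 : (Fin.cons γ c : Fin (m + 2) → V → Fin ℓ) ((0 : Fin (m + 1)).castSucc) = γ := by
            simp
          have e2 : (Fin.cons γ c : Fin (m + 2) → V → Fin ℓ) ((0 : Fin (m + 1)).succ) = Function.update γ p.1 p.2 := by
            rw [Fin.cons_succ, hc0]
          rw [e1, e2]
          refine ⟨p.1, ?_, fun w hw => ?_⟩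
          · show γ p.1 ≠ Function.update γ p.1 p.2 p.1
            rw [Function.update_self]; exact fun hh => hchange hh.symm
          · by_contra hne
            exact hw (by rw [Function.update_of_ne hne])
        | succ j =>
          have e1 : (Fin.cons γ c : Fin (m + 2) → V → Fin ℓ) (j.succ.castSucc) = c j.castSucc := by
            rw [← Fin.succ_castSucc, Fin.cons_succ]
          have e2 : (Fin.cons γ c : Fin (m + 2) → V → Fin ℓ) (j.succ.succ) = c j.succ := by
            rw [Fin.cons_succ]
          rw [e1, e2]
          exact hcstep j
      · have key : RecolorCount (Fin.cons γ c) v =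
            (if v = p.1 then 1 else 0) + RecolorCount c v := by
          unfold RecolorCount
          rw [Finset.card_filter, Finset.card_filter, Fin.sum_univ_succ]
          congr 1
          · have e1 : (Fin.cons γ c : Fin (m + 2) → V → Fin ℓ) ((0 : Fin (m + 1)).castSucc) = γ := by
              simp
            have e2 : (Fin.cons γ c : Fin (m + 2) → V → Fin ℓ) ((0 : Fin (m + 1)).succ) = Function.update γ p.1 p.2 := by
              rw [Fin.cons_succ, hc0]
            rw [e1, e2]
            by_cases hv : v = p.1
            · subst hv
              rw [Function.update_self, if_pos (fun hh => hchange hh.symm), if_pos rfl]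
            · rw [Function.update_of_ne hv, if_neg (by simp), if_neg hv]
        rw [key, List.countP_cons]
        have h2 := hcount v
        rcases eq_or_ne v p.1 with h | h
        · simp only [h] at h2 ⊢
          simp only [if_pos trivial, decide_true, if_pos rfl]
          omega
        · rw [if_neg h]
          have hd : decide (p.1 = v) = false := by simp [Ne.symm h]
          rw [hd]
          simp only [Bool.false_eq_true, if_false]
          omega

end General

section Phases
variable {V : Type} [DecidableEq V] {ℓ : ℕ} (G : SimpleGraph V)

lemma applyMoves_append (L1 L2 : List (V × Fin ℓ)) (γ : V → Fin ℓ) :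
    applyMoves (L1 ++ L2) γ = applyMoves L2 (applyMoves L1 γ) := by
  induction L1 generalizing γ with
  | nil => rfl
  | cons p L ih => rw [List.cons_append]; exact ih _

lemma ValidMoves_append {L1 L2 : List (V × Fin ℓ)} {γ : V → Fin ℓ}
    (h1 : ValidMoves G γ L1) (h2 : ValidMoves G (applyMoves L1 γ) L2) :
    ValidMoves G γ (L1 ++ L2) := by
  induction L1 generalizing γ with
  | nil => exact h2
  | cons p L ih => exact ⟨h1.1, ih h1.2 h2⟩

lemma valid_ofFn (f : ℕ → V × Fin ℓ) (g : ℕ → V → Fin ℓ) (t : ℕ)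
    (hstep : ∀ j, j < t → (Function.update (g j) (f j).1 (f j).2 = g (j + 1) ∧
        ∀ u, G.Adj (f j).1 u → (f j).2 ≠ g j u)) :
    ValidMoves G (g 0) ((List.range t).map f) ∧
      applyMoves ((List.range t).map f) (g 0) = g t := by
  induction t with
  | zero => exact ⟨trivial, rfl⟩
  | succ t ih =>
    have ih' := ih (fun j hj => hstep j (by omega))
    rw [List.range_succ, List.map_append]
    constructor
    · refine ValidMoves_append G ih'.1 ?_
      rw [ih'.2]
      exact ⟨(hstep t (by omega)).2, trivial⟩
    · rw [applyMoves_append, ih'.2]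
      show Function.update (g t) (f t).1 (f t).2 = g (t + 1)
      exact (hstep t (by omega)).1

lemma countP_range_le_one (t : ℕ) (q : ℕ → Bool)
    (hq : ∀ i j, i < t → j < t → q i = true → q j = true → i = j) :
    (List.range t).countP q ≤ 1 := by
  induction t with
  | zero => simp
  | succ t ih =>
    rw [List.range_succ, List.countP_append]
    by_cases h : q t = true
    · have hz : (List.range t).countP q = 0 := by
        rw [List.countP_eq_zero]
        intro a ha hqa
        have ha' := List.mem_range.mp ha
        have := hq a t (by omega) (by omega) hqa h
        omega
      have hone : List.countP q [t] ≤ 1 := by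
        rw [List.countP_cons, List.countP_nil]
        split_ifs <;> omega
      omega
    · have hz : List.countP q [t] = 0 := by
        simp [List.countP_cons, h]
      have := ih (fun i j hi hj => hq i j (by omega) (by omega))
      omega

end Phases

lemma exists_ne3 {ℓ : ℕ} (hℓ : 4 ≤ ℓ) (x y z : Fin ℓ) :
    ∃ w : Fin ℓ, w ≠ x ∧ w ≠ y ∧ w ≠ z := by
  by_contra h
  push_neg at h
  have hsub : (Finset.univ : Finset (Fin ℓ)) ⊆ {x, y, z} := by
    intro w _
    simp only [Finset.mem_insert, Finset.mem_singleton]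
    by_cases h1 : w = x
    · exact Or.inl h1
    · by_cases h2 : w = y
      · exact Or.inr (Or.inl h2)
      · exact Or.inr (Or.inr (h w h1 h2))
  have h3 := Finset.card_le_card hsub
  have h4 : ({x, y, z} : Finset (Fin ℓ)).card ≤ 3 := by
    apply le_trans (Finset.card_insert_le _ _)
    have h5 := Finset.card_insert_le y ({z} : Finset (Fin ℓ))
    simp only [Finset.card_singleton] at h5 ⊢
    omega
  rw [Finset.card_univ, Fintype.card_fin] at h3
  omega

noncomputable def pick3 {ℓ : ℕ} (hℓ : 4 ≤ ℓ) (x y z : Fin ℓ) : Fin ℓ :=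
  (exists_ne3 hℓ x y z).choose

lemma pick3_spec {ℓ : ℕ} (hℓ : 4 ≤ ℓ) (x y z : Fin ℓ) :
    pick3 hℓ x y z ≠ x ∧ pick3 hℓ x y z ≠ y ∧ pick3 hℓ x y z ≠ z :=
  (exists_ne3 hℓ x y z).choose_spec

def vtx (k i : ℕ) : Fin (k + 3) := ⟨i % (k + 3), Nat.mod_lt _ (by omega)⟩

lemma vtx_val {k i : ℕ} (h : i < k + 3) : (vtx k i).val = i := Nat.mod_eq_of_lt h

lemma eq_vtx {k : ℕ} {u : Fin (k + 3)} {i : ℕ} (h : i < k + 3) (hu : u.val = i) :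
    u = vtx k i := Fin.ext (by rw [vtx_val h, hu])

lemma cycle_adj_iff {k : ℕ} {u w : Fin (k + 3)} :
    (cycleGraph (k + 3)).Adj u w ↔
      u.val + 1 = w.val ∨ w.val + 1 = u.val ∨ (u.val = 0 ∧ w.val = k + 2) ∨
        (w.val = 0 ∧ u.val = k + 2) := by
  have h1 : (cycleGraph (k + 3)).Adj u w ↔ u - w = 1 ∨ w - u = 1 := @cycleGraph_adj (k + 1) u w
  have e : ∀ x y : Fin (k + 3), x - y = 1 ↔ x.val = (y.val + 1) % (k + 3) := by
    intro x y
    have hv : ((1 + y : Fin (k + 3))).val = (y.val + 1) % (k + 3) := by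
      rw [Fin.val_add, Fin.val_one (k + 1), Nat.add_comm]
    rw [sub_eq_iff_eq_add, Fin.ext_iff, hv]
  have e2 : ∀ y : Fin (k + 3), (y.val + 1) % (k + 3) = if y.val = k + 2 then 0 else y.val + 1 := by
    intro y
    split_ifs with h
    · rw [h, show k + 2 + 1 = k + 3 by omega, Nat.mod_self]
    · exact Nat.mod_eq_of_lt (by omega)
  rw [h1, e, e, e2, e2]
  have hu := u.isLt
  have hw := w.isLt
  split_ifs <;> omega

lemma adj_vtx_succ {k i : ℕ} (h : i + 1 ≤ k + 2) :
    (cycleGraph (k + 3)).Adj (vtx k i) (vtx k (i + 1)) := by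
  rw [cycle_adj_iff, vtx_val (by omega), vtx_val (by omega)]
  left; rfl

lemma adj_wrap {k : ℕ} : (cycleGraph (k + 3)).Adj (vtx k 0) (vtx k (k + 2)) := by
  rw [cycle_adj_iff, vtx_val (by omega), vtx_val (by omega)]
  exact Or.inr (Or.inr (Or.inl ⟨rfl, rfl⟩))

section Construction
variable {k ℓ : ℕ}

noncomputable def colA (hℓ : 4 ≤ ℓ) (α β : Fin (k + 3) → Fin ℓ) : Fin ℓ :=
  pick3 hℓ (α (vtx k 1)) (α (vtx k (k + 2))) (β (vtx k 1))

noncomputable def delta (hℓ : 4 ≤ ℓ) (α β : Fin (k + 3) → Fin ℓ) : ℕ → Fin ℓ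
  | 0 => colA hℓ α β
  | j + 1 => pick3 hℓ (delta hℓ α β j)
      (if j + 1 = k + 2 then colA hℓ α β else α (vtx k (j + 2))) (β (vtx k j))

noncomputable def colB (hℓ : 4 ≤ ℓ) (α β : Fin (k + 3) → Fin ℓ) : Fin ℓ :=
  pick3 hℓ (β (vtx k 1)) (delta hℓ α β (k + 2)) (β (vtx k (k + 2)))

noncomputable def g1 (hℓ : 4 ≤ ℓ) (α β : Fin (k + 3) → Fin ℓ) (j : ℕ) : Fin (k + 3) → Fin ℓ :=
  fun u => if u.val = 0 then colA hℓ α β else if u.val ≤ j then delta hℓ α β u.val else α u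

noncomputable def s1 (hℓ : 4 ≤ ℓ) (α β : Fin (k + 3) → Fin ℓ) : Fin (k + 3) → Fin ℓ :=
  fun u => if u.val = 0 then colA hℓ α β else if u.val = 1 then β u else delta hℓ α β u.val

noncomputable def h2 (hℓ : 4 ≤ ℓ) (α β : Fin (k + 3) → Fin ℓ) (j : ℕ) : Fin (k + 3) → Fin ℓ :=
  fun u => if u.val = 0 then colB hℓ α β else if u.val ≤ j + 1 then β u else delta hℓ α β u.val

variable (hℓ : 4 ≤ ℓ) (α β : Fin (k + 3) → Fin ℓ)

lemma delta_succ (j : ℕ) : delta hℓ α β (j + 1) = pick3 hℓ (delta hℓ α β j)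
    (if j + 1 = k + 2 then colA hℓ α β else α (vtx k (j + 2))) (β (vtx k j)) := rfl

lemma step1 (hα : IsProperColoring (cycleGraph (k + 3)) α) :
    ∀ u, (cycleGraph (k + 3)).Adj (vtx k 0) u → colA hℓ α β ≠ α u := by
  intro u hadj
  rw [cycle_adj_iff, vtx_val (by omega)] at hadj
  obtain ⟨h1, h2, h3⟩ := pick3_spec hℓ (α (vtx k 1)) (α (vtx k (k + 2))) (β (vtx k 1))
  have hu := u.isLt
  rcases hadj with h | h | h | h
  · rw [show u = vtx k 1 from eq_vtx (by omega) (by omega)]; exact h1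
  · omega
  · rw [show u = vtx k (k + 2) from eq_vtx (by omega) (by omega)]; exact h2
  · omega

lemma upd1 : Function.update α (vtx k 0) (colA hℓ α β) = g1 hℓ α β 0 := by
  funext u
  rcases eq_or_ne u (vtx k 0) with rfl | hu
  · rw [Function.update_self]
    simp only [g1]
    rw [if_pos (vtx_val (by omega))]
  · rw [Function.update_of_ne hu]
    simp only [g1]
    have h0 : u.val ≠ 0 := fun h => hu (eq_vtx (by omega) h)
    rw [if_neg h0, if_neg (by omega)]

lemma phase1_step (j : ℕ) (hj : j < k + 2) :
    Function.update (g1 hℓ α β j) (vtx k (j + 1)) (delta hℓ α β (j + 1)) = g1 hℓ α β (j + 1) ∧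
    ∀ u, (cycleGraph (k + 3)).Adj (vtx k (j + 1)) u → delta hℓ α β (j + 1) ≠ g1 hℓ α β j u := by
  constructor
  · funext u
    rcases eq_or_ne u (vtx k (j + 1)) with rfl | hu
    · rw [Function.update_self]
      simp only [g1]
      rw [vtx_val (by omega)]
      rw [if_neg (by omega), if_pos (by omega)]
    · rw [Function.update_of_ne hu]
      simp only [g1]
      have hne : u.val ≠ j + 1 := fun h => hu (eq_vtx (by omega) h)
      by_cases h0 : u.val = 0
      · rw [if_pos h0, if_pos h0]
      · rw [if_neg h0, if_neg h0]
        by_cases hle : u.val ≤ j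
        · rw [if_pos hle, if_pos (by omega)]
        · rw [if_neg hle, if_neg (by omega)]
  · intro u hadj
    rw [cycle_adj_iff, vtx_val (by omega)] at hadj
    have hu := u.isLt
    obtain ⟨d1, d2, d3⟩ := pick3_spec hℓ (delta hℓ α β j)
      (if j + 1 = k + 2 then colA hℓ α β else α (vtx k (j + 2))) (β (vtx k j))
    rw [← delta_succ hℓ α β j] at d1 d2 d3
    simp only [g1]
    rcases hadj with h | h | h | h
    · -- u.val = j + 2
      rw [if_neg (by omega), if_neg (by omega)]
      rw [show u = vtx k (j + 2) from eq_vtx (by omega) (by omega)]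
      rw [if_neg (show ¬ j + 1 = k + 2 by omega)] at d2
      exact d2
    · -- u.val = j
      by_cases h0 : u.val = 0
      · rw [if_pos h0]
        have hj0 : j = 0 := by omega
        subst hj0
        exact d1
      · rw [if_neg h0, if_pos (by omega)]
        rw [show u.val = j from by omega]
        exact d1
    · omega
    · -- u.val = 0 ∧ j + 1 = k + 2
      rw [if_pos h.1]
      rw [if_pos h.2] at d2
      exact d2

lemma step2 : ∀ u, (cycleGraph (k + 3)).Adj (vtx k 1) u → β (vtx k 1) ≠ g1 hℓ α β (k + 2) u := by
  intro u hadj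
  rw [cycle_adj_iff, vtx_val (by omega)] at hadj
  have hu := u.isLt
  simp only [g1]
  rcases hadj with h | h | h | h
  · -- u.val = 2
    rw [if_neg (by omega), if_pos (by omega)]
    rw [show u.val = 2 from by omega]
    obtain ⟨d1, d2, d3⟩ := pick3_spec hℓ (delta hℓ α β 1)
      (if 1 + 1 = k + 2 then colA hℓ α β else α (vtx k 3)) (β (vtx k 1))
    exact fun hh => d3 hh.symm
  · -- u.val = 0
    rw [if_pos (by omega)]
    obtain ⟨a1, a2, a3⟩ := pick3_spec hℓ (α (vtx k 1)) (α (vtx k (k + 2))) (β (vtx k 1))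
    exact fun hh => a3 hh.symm
  · omega
  · omega

lemma upd2 : Function.update (g1 hℓ α β (k + 2)) (vtx k 1) (β (vtx k 1)) = s1 hℓ α β := by
  funext u
  rcases eq_or_ne u (vtx k 1) with rfl | hu
  · rw [Function.update_self]
    simp only [s1]
    rw [vtx_val (by omega)]
    rw [if_neg (by omega), if_pos rfl]
  · rw [Function.update_of_ne hu]
    simp only [g1, s1]
    have hne : u.val ≠ 1 := fun h => hu (eq_vtx (by omega) h)
    by_cases h0 : u.val = 0
    · rw [if_pos h0, if_pos h0]
    · rw [if_neg h0, if_neg h0, if_pos (by omega), if_neg hne]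

lemma step3 : ∀ u, (cycleGraph (k + 3)).Adj (vtx k 0) u → colB hℓ α β ≠ s1 hℓ α β u := by
  intro u hadj
  rw [cycle_adj_iff, vtx_val (by omega)] at hadj
  have hu := u.isLt
  obtain ⟨b1, b2, b3⟩ := pick3_spec hℓ (β (vtx k 1)) (delta hℓ α β (k + 2)) (β (vtx k (k + 2)))
  simp only [s1]
  rcases hadj with h | h | h | h
  · -- u.val = 1
    rw [if_neg (by omega), if_pos (by omega)]
    rw [show u = vtx k 1 from eq_vtx (by omega) (by omega)]
    exact b1
  · omega
  · -- u.val = k + 2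
    rw [if_neg (by omega), if_neg (by omega)]
    rw [show u.val = k + 2 from h.2]
    exact b2
  · omega

lemma upd3 : Function.update (s1 hℓ α β) (vtx k 0) (colB hℓ α β) = h2 hℓ α β 0 := by
  funext u
  rcases eq_or_ne u (vtx k 0) with rfl | hu
  · rw [Function.update_self]
    simp only [h2]
    rw [if_pos (vtx_val (by omega))]
  · rw [Function.update_of_ne hu]
    simp only [s1, h2]
    have h0 : u.val ≠ 0 := fun h => hu (eq_vtx (by omega) h)
    rw [if_neg h0, if_neg h0]
    by_cases h1 : u.val = 1
    · rw [if_pos h1, if_pos (by omega)]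
    · rw [if_neg h1, if_neg (by omega)]

lemma phase2_step (hβ : IsProperColoring (cycleGraph (k + 3)) β) (j : ℕ) (hj : j < k + 1) :
    Function.update (h2 hℓ α β j) (vtx k (j + 2)) (β (vtx k (j + 2))) = h2 hℓ α β (j + 1) ∧
    ∀ u, (cycleGraph (k + 3)).Adj (vtx k (j + 2)) u → β (vtx k (j + 2)) ≠ h2 hℓ α β j u := by
  constructor
  · funext u
    rcases eq_or_ne u (vtx k (j + 2)) with rfl | hu
    · rw [Function.update_self]
      simp only [h2]
      rw [vtx_val (by omega)]
      rw [if_neg (by omega), if_pos (by omega)]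
    · rw [Function.update_of_ne hu]
      simp only [h2]
      have hne : u.val ≠ j + 2 := fun h => hu (eq_vtx (by omega) h)
      by_cases h0 : u.val = 0
      · rw [if_pos h0, if_pos h0]
      · rw [if_neg h0, if_neg h0]
        by_cases hle : u.val ≤ j + 1
        · rw [if_pos hle, if_pos (by omega)]
        · rw [if_neg hle, if_neg (by omega)]
  · intro u hadj
    rw [cycle_adj_iff, vtx_val (by omega)] at hadj
    have hu := u.isLt
    simp only [h2]
    rcases hadj with h | h | h | h
    · -- u.val = j + 3
      rw [if_neg (by omega), if_neg (by omega)]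
      rw [show u.val = j + 3 from by omega]
      obtain ⟨d1, d2, d3⟩ := pick3_spec hℓ (delta hℓ α β (j + 2))
        (if j + 2 + 1 = k + 2 then colA hℓ α β else α (vtx k (j + 2 + 2))) (β (vtx k (j + 2)))
      exact fun hh => d3 hh.symm
    · -- u.val = j + 1
      rw [if_neg (by omega), if_pos (by omega)]
      rw [show u = vtx k (j + 1) from eq_vtx (by omega) (by omega)]
      exact fun hh => hβ (adj_vtx_succ (show j + 1 + 1 ≤ k + 2 by omega)) hh.symm
    · omega
    · -- u.val = 0 ∧ j + 2 = k + 2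
      rw [if_pos h.1]
      obtain ⟨b1, b2, b3⟩ := pick3_spec hℓ (β (vtx k 1)) (delta hℓ α β (k + 2)) (β (vtx k (k + 2)))
      rw [show j + 2 = k + 2 from h.2]
      exact fun hh => b3 hh.symm

lemma step4 (hβ : IsProperColoring (cycleGraph (k + 3)) β) :
    ∀ u, (cycleGraph (k + 3)).Adj (vtx k 0) u → β (vtx k 0) ≠ h2 hℓ α β (k + 1) u := by
  intro u hadj
  rw [cycle_adj_iff, vtx_val (by omega)] at hadj
  have hu := u.isLt
  simp only [h2]
  rcases hadj with h | h | h | h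
  · -- u.val = 1
    rw [if_neg (by omega), if_pos (by omega)]
    rw [show u = vtx k 1 from eq_vtx (by omega) (by omega)]
    exact hβ (adj_vtx_succ (show 0 + 1 ≤ k + 2 by omega))
  · omega
  · -- u.val = k + 2
    rw [if_neg (by omega), if_pos (by omega)]
    rw [show u = vtx k (k + 2) from eq_vtx (by omega) h.2]
    exact hβ adj_wrap
  · omega

lemma upd4 : Function.update (h2 hℓ α β (k + 1)) (vtx k 0) (β (vtx k 0)) = β := by
  funext u
  rcases eq_or_ne u (vtx k 0) with rfl | hu
  · rw [Function.update_self]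
  · rw [Function.update_of_ne hu]
    simp only [h2]
    have h0 : u.val ≠ 0 := fun h => hu (eq_vtx (by omega) h)
    rw [if_neg h0, if_pos (by omega)]

end Construction

section Assemble
variable {k ℓ : ℕ}

lemma applyMoves_cons {V : Type} [DecidableEq V] (p : V × Fin ℓ) (L : List (V × Fin ℓ))
    (γ : V → Fin ℓ) : applyMoves (p :: L) γ = applyMoves L (Function.update γ p.1 p.2) := rfl

lemma applyMoves_nil {V : Type} [DecidableEq V] (γ : V → Fin ℓ) :
    applyMoves ([] : List (V × Fin ℓ)) γ = γ := rfl

variable (hℓ : 4 ≤ ℓ) (α β : Fin (k + 3) → Fin ℓ)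

noncomputable def movesM : List (Fin (k + 3) × Fin ℓ) :=
  (vtx k 0, colA hℓ α β) ::
    ((List.range (k + 2)).map (fun j => (vtx k (j + 1), delta hℓ α β (j + 1))) ++
      ((vtx k 1, β (vtx k 1)) :: (vtx k 0, colB hℓ α β) ::
        ((List.range (k + 1)).map (fun j => (vtx k (j + 2), β (vtx k (j + 2)))) ++
          [(vtx k 0, β (vtx k 0))])))

lemma movesM_valid (hα : IsProperColoring (cycleGraph (k + 3)) α)
    (hβ : IsProperColoring (cycleGraph (k + 3)) β) :
    ValidMoves (cycleGraph (k + 3)) α (movesM hℓ α β) ∧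
      applyMoves (movesM hℓ α β) α = β := by
  have hph1 := valid_ofFn (cycleGraph (k + 3))
    (fun j => (vtx k (j + 1), delta hℓ α β (j + 1))) (g1 hℓ α β) (k + 2)
    (fun j hj => phase1_step hℓ α β j hj)
  have hph2 := valid_ofFn (cycleGraph (k + 3))
    (fun j => (vtx k (j + 2), β (vtx k (j + 2)))) (h2 hℓ α β) (k + 1)
    (fun j hj => phase2_step hℓ α β hβ j hj)
  constructor
  · show ValidMoves _ _ (_ :: _)
    refine ⟨step1 hℓ α β hα, ?_⟩
    show ValidMoves _ (Function.update α (vtx k 0) (colA hℓ α β)) _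
    rw [upd1 hℓ α β]
    refine ValidMoves_append _ hph1.1 ?_
    rw [hph1.2]
    refine ⟨step2 hℓ α β, ?_⟩
    show ValidMoves _ (Function.update (g1 hℓ α β (k + 2)) (vtx k 1) (β (vtx k 1))) _
    rw [upd2 hℓ α β]
    refine ⟨step3 hℓ α β, ?_⟩
    show ValidMoves _ (Function.update (s1 hℓ α β) (vtx k 0) (colB hℓ α β)) _
    rw [upd3 hℓ α β]
    refine ValidMoves_append _ hph2.1 ?_
    rw [hph2.2]
    exact ⟨step4 hℓ α β hβ, trivial⟩
  · show applyMoves (_ :: _) _ = β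
    simp only [movesM, applyMoves_cons, applyMoves_append, applyMoves_nil]
    rw [upd1 hℓ α β, hph1.2, upd2 hℓ α β, upd3 hℓ α β, hph2.2, upd4 hℓ α β]

lemma movesM_count (u : Fin (k + 3)) :
    (movesM hℓ α β).countP (fun p => decide (p.1 = u)) ≤ 3 := by
  have hu := u.isLt
  have cP1 : ((List.range (k + 2)).map
      (fun j => (vtx k (j + 1), delta hℓ α β (j + 1)))).countP (fun p => decide (p.1 = u)) ≤ 1 := by
    rw [List.countP_map]
    apply countP_range_le_one
    intro i j hi hj hqi hqj
    simp only [Function.comp, decide_eq_true_eq] at hqi hqj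
    have := congrArg Fin.val (hqi.trans hqj.symm)
    rw [vtx_val (by omega), vtx_val (by omega)] at this
    omega
  have cP1z : u.val = 0 → ((List.range (k + 2)).map
      (fun j => (vtx k (j + 1), delta hℓ α β (j + 1)))).countP (fun p => decide (p.1 = u)) = 0 := by
    intro hu0
    rw [List.countP_map, List.countP_eq_zero]
    intro a ha
    have ha' := List.mem_range.mp ha
    simp only [Function.comp, decide_eq_true_eq]
    intro h
    have := congrArg Fin.val h
    rw [vtx_val (by omega)] at this
    omega
  have cP2 : ((List.range (k + 1)).map
      (fun j => (vtx k (j + 2), β (vtx k (j + 2))))).countP (fun p => decide (p.1 = u)) ≤ 1 := by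
    rw [List.countP_map]
    apply countP_range_le_one
    intro i j hi hj hqi hqj
    simp only [Function.comp, decide_eq_true_eq] at hqi hqj
    have := congrArg Fin.val (hqi.trans hqj.symm)
    rw [vtx_val (by omega), vtx_val (by omega)] at this
    omega
  have cP2z : u.val ≤ 1 → ((List.range (k + 1)).map
      (fun j => (vtx k (j + 2), β (vtx k (j + 2))))).countP (fun p => decide (p.1 = u)) = 0 := by
    intro hu1
    rw [List.countP_map, List.countP_eq_zero]
    intro a ha
    have ha' := List.mem_range.mp ha
    simp only [Function.comp, decide_eq_true_eq]
    intro h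
    have := congrArg Fin.val h
    rw [vtx_val (by omega)] at this
    omega
  simp only [movesM, List.countP_cons, List.countP_append, List.countP_nil,
    decide_eq_true_eq]
  by_cases hu0 : u.val = 0
  · have h00 : vtx k 0 = u := (eq_vtx (by omega) hu0).symm
    have h10 : ¬ (vtx k 1 = u) := by
      intro h
      have := congrArg Fin.val h
      rw [vtx_val (by omega)] at this
      omega
    rw [cP1z hu0, cP2z (by omega), if_pos h00, if_neg h10]
  · have h00 : ¬ (vtx k 0 = u) := by
      intro h
      have := congrArg Fin.val h
      rw [vtx_val (by omega)] at this
      omega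
    by_cases hu1 : u.val = 1
    · have h11 : vtx k 1 = u := (eq_vtx (by omega) hu1).symm
      rw [cP2z (by omega), if_neg h00, if_pos h11]
      omega
    · have h10 : ¬ (vtx k 1 = u) := by
        intro h
        have := congrArg Fin.val h
        rw [vtx_val (by omega)] at this
        omega
      rw [if_neg h00, if_neg h10]
      omega

end Assemble

theorem cycle_graph_recolor
    (n : ℕ) (hn : 3 ≤ n) (ℓ : ℕ) (hℓ : 4 ≤ ℓ)
    (α β : Fin n → Fin ℓ)
    (hα : IsProperColoring (SimpleGraph.cycleGraph n) α)
    (hβ : IsProperColoring (SimpleGraph.cycleGraph n) β) :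
    ∃ (m : ℕ) (c : Fin (m + 1) → Fin n → Fin ℓ),
      IsTransformSeq (SimpleGraph.cycleGraph n) c α β ∧
      ∀ v : Fin n, RecolorCount c v ≤ 3 := by
  obtain ⟨k, rfl⟩ : ∃ k, n = k + 3 := ⟨n - 3, by omega⟩
  obtain ⟨hvalid, happly⟩ := movesM_valid hℓ α β hα hβ
  obtain ⟨m, c, hseq, hcnt⟩ :=
    exists_transform (SimpleGraph.cycleGraph (k + 3)) (movesM hℓ α β) α hα hvalid
  rw [happly] at hseq
  exact ⟨m, c, hseq, fun v => le_trans (hcnt v) (movesM_count hℓ α β v)⟩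
end
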